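/- arXiv:1905.13026 — 5 statements merged into one kernel-verified Lean document; each statement's English description precedes it below -/
import Mathlib

section
/- Assume k ≥ 1, l ≥ 1, k ≠ 2 and l ≠ 2. Then the standard configuration F_std is the unique configuration satisfying the Hopf multiplicity data: every multiset F of nonempty subsets of H satisfying the Hopf multiplicity data is equal, as a multiset, to F_std. In particular every such F has exactly k + l + 3 members, which exceeds the number k + l + 1 of holes by 2. -/
/-- The set of holes: the distinguished hole `s` is `none`, the positive holes are
`some (Sum.inl i)` for `i : Fin k`, the negative holes are `some (Sum.inr j)` for `j : Fin l`. -/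
abbrev Hole (k l : ℕ) := Option (Fin k ⊕ Fin l)

/-- The distinguished hole `s`. -/
def sHole (k l : ℕ) : Hole k l := none

/-- The `i`-th positive hole. -/
def posHole (k l : ℕ) (i : Fin k) : Hole k l := some (Sum.inl i)

/-- The `j`-th negative hole. -/
def negHole (k l : ℕ) (j : Fin l) : Hole k l := some (Sum.inr j)

/-- The set `P` of positive holes. -/
def Pset (k l : ℕ) : Finset (Hole k l) := Finset.univ.image (posHole k l)

/-- The set `N` of negative holes. -/
def Nset (k l : ℕ) : Finset (Hole k l) := Finset.univ.image (negHole k l)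

/-- The multiplicity `m(x)`: the number of members of `F`, counted with multiplicity,
containing the hole `x`. -/
def mult {k l : ℕ} (F : Multiset (Finset (Hole k l))) (x : Hole k l) : ℕ :=
  (F.filter (fun A => x ∈ A)).card

/-- The joint multiplicity `m(x,y)`: the number of members of `F`, counted with
multiplicity, containing both holes `x` and `y`. -/
def jmult {k l : ℕ} (F : Multiset (Finset (Hole k l))) (x y : Hole k l) : ℕ :=
  (F.filter (fun A => x ∈ A ∧ y ∈ A)).card

/-- `F` satisfies the Hopf multiplicity data: `m(x) = 3` for all `x`; `m(x,y) = 2`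
whenever `x ≠ y` both lie in `P ∪ {s}` or both lie in `N ∪ {s}`; `m(x,y) = 1`
whenever `x ∈ P` and `y ∈ N`. -/
def HopfData {k l : ℕ} (F : Multiset (Finset (Hole k l))) : Prop :=
  (∀ x : Hole k l, mult F x = 3) ∧
  (∀ x y : Hole k l, x ≠ y → x ∈ insert (sHole k l) (Pset k l) →
      y ∈ insert (sHole k l) (Pset k l) → jmult F x y = 2) ∧
  (∀ x y : Hole k l, x ≠ y → x ∈ insert (sHole k l) (Nset k l) →
      y ∈ insert (sHole k l) (Nset k l) → jmult F x y = 2) ∧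
  (∀ x y : Hole k l, x ∈ Pset k l → y ∈ Nset k l → jmult F x y = 1)

/-- The standard configuration `F_std`: the full set `H`, the set `{s} ∪ P`,
the set `{s} ∪ N`, and a singleton `{x}` for each `x ∈ P ∪ N`. -/
def Fstd (k l : ℕ) : Multiset (Finset (Hole k l)) :=
  (Finset.univ : Finset (Hole k l)) ::ₘ
  insert (sHole k l) (Pset k l) ::ₘ
  insert (sHole k l) (Nset k l) ::ₘ
  ((Pset k l ∪ Nset k l).val.map (fun x => {x}))

namespace HopfAux

variable {k l : ℕ}

/-- The submultiset of members containing the distinguished hole `s = none`. -/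
def Mset (F : Multiset (Finset (Hole k l))) : Multiset (Finset (Hole k l)) :=
  F.filter (fun A => (none : Hole k l) ∈ A)

lemma mem_Mset {F : Multiset (Finset (Hole k l))} {A : Finset (Hole k l)} :
    A ∈ Mset F ↔ A ∈ F ∧ (none : Hole k l) ∈ A := by
  simp [Mset]

/-- The data of the unique member `C` of `M` avoiding `x` and the unique member `D`
of `F` containing `x` but not `s`. -/
structure Gadget (F : Multiset (Finset (Hole k l))) (x : Hole k l)
    (C D : Finset (Hole k l)) : Prop where
  hCM : C ∈ Mset F
  hxC : x ∉ C
  hMC : Mset F = C ::ₘ (Mset F).filter (fun A => x ∈ A)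
  hFD : F.filter (fun A => x ∈ A) = D ::ₘ (Mset F).filter (fun A => x ∈ A)
  hxD : x ∈ D
  hsD : (none : Hole k l) ∉ D

lemma jmult_comm' (F : Multiset (Finset (Hole k l))) (x y : Hole k l) :
    Multiset.card (F.filter (fun A => x ∈ A ∧ y ∈ A))
      = Multiset.card (F.filter (fun A => y ∈ A ∧ x ∈ A)) := by
  congr 1
  exact Multiset.filter_congr fun A _ => and_comm

lemma jmult_filter (F : Multiset (Finset (Hole k l))) (x y : Hole k l) :
    Multiset.card (F.filter (fun A => x ∈ A ∧ y ∈ A))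
      = Multiset.card ((F.filter (fun A => x ∈ A)).filter (fun A => y ∈ A)) := by
  rw [Multiset.filter_filter]
  congr 1
  exact Multiset.filter_congr fun A _ => and_comm

lemma gadget_exists (F : Multiset (Finset (Hole k l))) (x : Hole k l)
    (hm : Multiset.card (F.filter (fun A => x ∈ A)) = 3)
    (hM3 : Multiset.card (Mset F) = 3)
    (h2 : Multiset.card ((Mset F).filter (fun A => x ∈ A)) = 2) :
    ∃ C D, Gadget F x C D := by
  have hT_le : (Mset F).filter (fun A => x ∈ A) ≤ F.filter (fun A => x ∈ A) :=
    Multiset.filter_le_filter _ (Multiset.filter_le _ F)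
  have hlt : (Mset F).filter (fun A => x ∈ A) < F.filter (fun A => x ∈ A) :=
    lt_of_le_of_ne hT_le (by intro h; rw [h, hm] at h2; omega)
  obtain ⟨D, hD⟩ := Multiset.lt_iff_cons_le.mp hlt
  have hFD : F.filter (fun A => x ∈ A) = D ::ₘ (Mset F).filter (fun A => x ∈ A) :=
    (Multiset.eq_of_le_of_card_le hD (by rw [hm, Multiset.card_cons, h2])).symm
  have hxD : x ∈ D := by
    have : D ∈ F.filter (fun A => x ∈ A) := by
      rw [hFD]; exact Multiset.mem_cons_self D _
    exact (Multiset.mem_filter.mp this).2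
  have hTs : ∀ A ∈ (Mset F).filter (fun A => x ∈ A), (none : Hole k l) ∈ A :=
    fun A hA => (mem_Mset.mp (Multiset.mem_filter.mp hA).1).2
  have hsD : (none : Hole k l) ∉ D := by
    have e1 : Multiset.card ((F.filter (fun A => x ∈ A)).filter
        (fun A => (none : Hole k l) ∈ A)) = 2 := by
      rw [Multiset.filter_filter]
      have e0 : Multiset.filter (fun A => (none : Hole k l) ∈ A ∧ x ∈ A) F
          = (Mset F).filter (fun A => x ∈ A) := by
        show _ = Multiset.filter (fun A => x ∈ A)
          (Multiset.filter (fun A => (none : Hole k l) ∈ A) F)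
        rw [Multiset.filter_filter]
        exact Multiset.filter_congr fun A _ => and_comm
      rw [e0]
      exact h2
    rw [hFD, Multiset.filter_cons, Multiset.filter_eq_self.mpr hTs, Multiset.card_add] at e1
    intro hmem
    rw [if_pos hmem] at e1
    simp [h2] at e1
  -- the C part
  have hnot := Multiset.filter_add_not (fun A => x ∈ A) (Mset F)
  have hc1 : Multiset.card ((Mset F).filter (fun A => ¬ x ∈ A)) = 1 := by
    have := congrArg Multiset.card hnot
    rw [Multiset.card_add, h2, hM3] at this
    omega
  obtain ⟨C, hC⟩ := Multiset.card_eq_one.mp hc1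
  have hCmem : C ∈ (Mset F).filter (fun A => ¬ x ∈ A) := by
    rw [hC]; exact Multiset.mem_singleton_self C
  have hCM : C ∈ Mset F := (Multiset.mem_filter.mp hCmem).1
  have hxC : x ∉ C := (Multiset.mem_filter.mp hCmem).2
  refine ⟨C, D, ⟨hCM, hxC, ?_, hFD, hxD, hsD⟩⟩
  have e3 : Mset F = (Mset F).filter (fun A => x ∈ A) + {C} := by
    rw [← hC, hnot]
  conv_lhs => rw [e3]
  rw [add_comm, Multiset.singleton_add]

lemma gadget_count {F : Multiset (Finset (Hole k l))} {x : Hole k l}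
    {C D : Finset (Hole k l)} (g : Gadget F x C D) (y : Hole k l) :
    Multiset.card (F.filter (fun A => x ∈ A ∧ y ∈ A)) + (if y ∈ C then 1 else 0)
      = (if y ∈ D then 1 else 0) + Multiset.card ((Mset F).filter (fun A => y ∈ A)) := by
  have e1 : Multiset.card (F.filter (fun A => x ∈ A ∧ y ∈ A))
      = Multiset.card (Multiset.filter (fun A => y ∈ A)
          (D ::ₘ (Mset F).filter (fun A => x ∈ A))) := by
    rw [jmult_filter, g.hFD]
  have e2 : Multiset.card ((Mset F).filter (fun A => y ∈ A))
      = Multiset.card (Multiset.filter (fun A => y ∈ A)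
          (C ::ₘ (Mset F).filter (fun A => x ∈ A))) := by
    conv_lhs => rw [g.hMC]
  rw [Multiset.filter_cons, Multiset.card_add] at e1 e2
  by_cases hD : y ∈ D <;> by_cases hC : y ∈ C <;>
    simp [hD, hC] at e1 e2 ⊢ <;> omega

lemma rel_same {F : Multiset (Finset (Hole k l))} {x y : Hole k l}
    {C D : Finset (Hole k l)} (g : Gadget F x C D)
    (h2 : Multiset.card (F.filter (fun A => x ∈ A ∧ y ∈ A)) = 2)
    (hy : Multiset.card ((Mset F).filter (fun A => y ∈ A)) = 2) :
    y ∈ D ↔ y ∈ C := by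
  have := gadget_count g y
  rw [h2, hy] at this
  by_cases hD : y ∈ D <;> by_cases hC : y ∈ C <;> simp [hD, hC] at this ⊢ <;> omega

lemma rel_cross {F : Multiset (Finset (Hole k l))} {x y : Hole k l}
    {C D : Finset (Hole k l)} (g : Gadget F x C D)
    (h1 : Multiset.card (F.filter (fun A => x ∈ A ∧ y ∈ A)) = 1)
    (hy : Multiset.card ((Mset F).filter (fun A => y ∈ A)) = 2) :
    y ∈ C ∧ y ∉ D := by
  have := gadget_count g y
  rw [h1, hy] at this
  by_cases hD : y ∈ D <;> by_cases hC : y ∈ C <;> simp [hD, hC] at this ⊢ <;> omega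

lemma D_eq {F : Multiset (Finset (Hole k l))} {x y : Hole k l}
    {Cx Dx Cy Dy : Finset (Hole k l)} (gx : Gadget F x Cx Dx) (gy : Gadget F y Cy Dy)
    (h : y ∈ Dx) : Dx = Dy := by
  have hDxF : Dx ∈ F := Multiset.mem_of_le (Multiset.filter_le _ F)
    (gx.hFD ▸ Multiset.mem_cons_self Dx _)
  have hmem : Dx ∈ F.filter (fun A => y ∈ A) := Multiset.mem_filter.mpr ⟨hDxF, h⟩
  rw [gy.hFD] at hmem
  rcases Multiset.mem_cons.mp hmem with h' | h'
  · exact h'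
  · exact absurd (mem_Mset.mp (Multiset.mem_filter.mp h').1).2 gx.hsD

lemma sym {F : Multiset (Finset (Hole k l))} {x y : Hole k l}
    {Cx Dx Cy Dy : Finset (Hole k l)} (gx : Gadget F x Cx Dx) (gy : Gadget F y Cy Dy)
    (hxy : Multiset.card (F.filter (fun A => x ∈ A ∧ y ∈ A)) = 2)
    (hcx : Multiset.card ((Mset F).filter (fun A => x ∈ A)) = 2)
    (hcy : Multiset.card ((Mset F).filter (fun A => y ∈ A)) = 2)
    (h : y ∈ Cx) : x ∈ Cy := by
  have hyD : y ∈ Dx := (rel_same gx hxy hcy).mpr h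
  have hDD := D_eq gx gy hyD
  have hxDy : x ∈ Dy := hDD ▸ gx.hxD
  exact (rel_same gy (by rw [jmult_comm']; exact hxy) hcx).mp hxDy

lemma cross_side {F : Multiset (Finset (Hole k l))} {x y z w : Hole k l}
    {Cx Dx Cy Dy Cz Dz Cw Dw : Finset (Hole k l)}
    (gx : Gadget F x Cx Dx) (gy : Gadget F y Cy Dy)
    (gz : Gadget F z Cz Dz) (gw : Gadget F w Cw Dw)
    (hM3 : Multiset.card (Mset F) = 3)
    (hcx : Multiset.card ((Mset F).filter (fun A => x ∈ A)) = 2)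
    (hcy : Multiset.card ((Mset F).filter (fun A => y ∈ A)) = 2)
    (hcz : Multiset.card ((Mset F).filter (fun A => z ∈ A)) = 2)
    (hcw : Multiset.card ((Mset F).filter (fun A => w ∈ A)) = 2)
    (hxy : Multiset.card (F.filter (fun A => x ∈ A ∧ y ∈ A)) = 2)
    (hxz : Multiset.card (F.filter (fun A => x ∈ A ∧ z ∈ A)) = 2)
    (hyz : Multiset.card (F.filter (fun A => y ∈ A ∧ z ∈ A)) = 2)
    (hxw : Multiset.card (F.filter (fun A => x ∈ A ∧ w ∈ A)) = 1)
    (hyw : Multiset.card (F.filter (fun A => y ∈ A ∧ w ∈ A)) = 1)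
    (hzw : Multiset.card (F.filter (fun A => z ∈ A ∧ w ∈ A)) = 1)
    (h : y ∈ Cx) : False := by
  have hyDx : y ∈ Dx := (rel_same gx hxy hcy).mpr h
  have hDxy : Dx = Dy := D_eq gx gy hyDx
  have hxCy : x ∈ Cy := sym gx gy hxy hcx hcy h
  have hxCw : x ∈ Cw := (rel_cross gw (by rw [jmult_comm']; exact hxw) hcx).1
  have hyCw : y ∈ Cw := (rel_cross gw (by rw [jmult_comm']; exact hyw) hcy).1
  have hzCw : z ∈ Cw := (rel_cross gw (by rw [jmult_comm']; exact hzw) hcz).1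
  have d1 : Cx ≠ Cy := fun e => gx.hxC (e ▸ hxCy)
  have d2 : Cx ≠ Cw := fun e => gx.hxC (e ▸ hxCw)
  have d3 : Cy ≠ Cw := fun e => gy.hxC (e ▸ hyCw)
  obtain ⟨M1, hM1⟩ := Multiset.exists_cons_of_mem gx.hCM
  have hCyM1 : Cy ∈ M1 := by
    have h0 := gy.hCM
    rw [hM1] at h0
    exact (Multiset.mem_cons.mp h0).resolve_left (fun e => d1 e.symm)
  obtain ⟨M2, hM2⟩ := Multiset.exists_cons_of_mem hCyM1
  have hCwM2 : Cw ∈ M2 := by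
    have h0 := gw.hCM
    rw [hM1, hM2] at h0
    rcases Multiset.mem_cons.mp h0 with e | h0
    · exact absurd e.symm d2
    · exact (Multiset.mem_cons.mp h0).resolve_left (fun e => d3 e.symm)
  obtain ⟨M3', hM3'⟩ := Multiset.exists_cons_of_mem hCwM2
  have hM30 : M3' = 0 := by
    have h0 := hM3
    rw [hM1, hM2, hM3'] at h0
    simpa using h0
  have hMeq : Mset F = Cx ::ₘ Cy ::ₘ Cw ::ₘ 0 := by
    rw [hM1, hM2, hM3', hM30]
  have hzcount := hcz
  rw [hMeq] at hzcount
  by_cases hzx : z ∈ Cx <;> by_cases hzy : z ∈ Cy <;>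
      simp [Multiset.filter_cons, Multiset.filter_singleton, hzx, hzy, hzCw, Multiset.card_add] at hzcount
  · -- z ∈ Cx, z ∉ Cy
    have hzDx : z ∈ Dx := (rel_same gx hxz hcz).mpr hzx
    have hDxz : Dx = Dz := D_eq gx gz hzDx
    have hyDz : y ∈ Dz := hDxz ▸ hyDx
    have hyCz : y ∈ Cz := (rel_same gz (by rw [jmult_comm']; exact hyz) hcy).mp hyDz
    exact hzy (sym gz gy (by rw [jmult_comm']; exact hyz) hcz hcy hyCz)
  · -- z ∉ Cx, z ∈ Cy
    have hzDy : z ∈ Dy := (rel_same gy hyz hcz).mpr hzy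
    have hDyz : Dy = Dz := D_eq gy gz hzDy
    have hxDz : x ∈ Dz := hDyz ▸ hDxy ▸ gx.hxD
    have hxCz : x ∈ Cz := (rel_same gz (by rw [jmult_comm']; exact hxz) hcx).mp hxDz
    exact hzx (sym gz gx (by rw [jmult_comm']; exact hxz) hcz hcx hxCz)

lemma card_Mset_filter (F : Multiset (Finset (Hole k l))) (y : Hole k l)
    (h : Multiset.card (F.filter (fun A => (none : Hole k l) ∈ A ∧ y ∈ A)) = 2) :
    Multiset.card ((Mset F).filter (fun A => y ∈ A)) = 2 := by
  unfold Mset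
  rw [← jmult_filter]
  exact h

end HopfAux

/-- If `k ≥ 1`, `l ≥ 1`, `k ≠ 2` and `l ≠ 2`, then every multiset `F` of
nonempty subsets of `H` satisfying the Hopf multiplicity data equals the standard
configuration `F_std`; in particular it has exactly `k + l + 3` members. -/
theorem hopf_config_unique (k l : ℕ) (hk : 1 ≤ k) (hl : 1 ≤ l) (hk2 : k ≠ 2) (hl2 : l ≠ 2)
    (F : Multiset (Finset (Hole k l))) (hne : ∀ A ∈ F, A.Nonempty) (hF : HopfData F) :
    F = Fstd k l ∧ Multiset.card F = k + l + 3 := by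
  classical
  obtain ⟨h3, hPPj, hNNj, hPNj⟩ := hF
  have i0 : Fin k := ⟨0, hk⟩
  have j0 : Fin l := ⟨0, hl⟩
  have hPmem : ∀ i : Fin k, (some (Sum.inl i) : Hole k l) ∈ insert (sHole k l) (Pset k l) :=
    fun i => Finset.mem_insert_of_mem (Finset.mem_image.mpr ⟨i, Finset.mem_univ i, rfl⟩)
  have hNmem : ∀ j : Fin l, (some (Sum.inr j) : Hole k l) ∈ insert (sHole k l) (Nset k l) :=
    fun j => Finset.mem_insert_of_mem (Finset.mem_image.mpr ⟨j, Finset.mem_univ j, rfl⟩)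
  have hPmem' : ∀ i : Fin k, (some (Sum.inl i) : Hole k l) ∈ Pset k l :=
    fun i => Finset.mem_image.mpr ⟨i, Finset.mem_univ i, rfl⟩
  have hNmem' : ∀ j : Fin l, (some (Sum.inr j) : Hole k l) ∈ Nset k l :=
    fun j => Finset.mem_image.mpr ⟨j, Finset.mem_univ j, rfl⟩
  -- joint multiplicity facts, in raw form
  have hpp : ∀ i i' : Fin k, i ≠ i' → Multiset.card (F.filter
      (fun A => (some (Sum.inl i) : Hole k l) ∈ A ∧ (some (Sum.inl i') : Hole k l) ∈ A)) = 2 :=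
    fun i i' h => hPPj _ _ (by simpa using h) (hPmem i) (hPmem i')
  have hnn : ∀ j j' : Fin l, j ≠ j' → Multiset.card (F.filter
      (fun A => (some (Sum.inr j) : Hole k l) ∈ A ∧ (some (Sum.inr j') : Hole k l) ∈ A)) = 2 :=
    fun j j' h => hNNj _ _ (by simpa using h) (hNmem j) (hNmem j')
  have hpn : ∀ (i : Fin k) (j : Fin l), Multiset.card (F.filter
      (fun A => (some (Sum.inl i) : Hole k l) ∈ A ∧ (some (Sum.inr j) : Hole k l) ∈ A)) = 1 :=
    fun i j => hPNj _ _ (hPmem' i) (hNmem' j)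
  have hsp : ∀ i : Fin k, Multiset.card (F.filter
      (fun A => (none : Hole k l) ∈ A ∧ (some (Sum.inl i) : Hole k l) ∈ A)) = 2 :=
    fun i => hPPj _ _ (by simp [sHole]) (Finset.mem_insert_self _ _) (hPmem i)
  have hsn : ∀ j : Fin l, Multiset.card (F.filter
      (fun A => (none : Hole k l) ∈ A ∧ (some (Sum.inr j) : Hole k l) ∈ A)) = 2 :=
    fun j => hNNj _ _ (by simp [sHole]) (Finset.mem_insert_self _ _) (hNmem j)
  have hM3 : Multiset.card (HopfAux.Mset F) = 3 := h3 (sHole k l)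
  have hc2 : ∀ zz : Fin k ⊕ Fin l,
      Multiset.card ((HopfAux.Mset F).filter (fun A => (some zz : Hole k l) ∈ A)) = 2 := by
    intro zz
    rcases zz with i | j
    · exact HopfAux.card_Mset_filter F _ (hsp i)
    · exact HopfAux.card_Mset_filter F _ (hsn j)
  have hgex : ∀ zz : Fin k ⊕ Fin l, ∃ C D, HopfAux.Gadget F (some zz) C D := fun zz =>
    HopfAux.gadget_exists F (some zz) (h3 (some zz)) hM3 (hc2 zz)
  choose C D hg using hgex
  -- no two distinct positive holes see each other through a `C`-set
  have hPside : ∀ i i' : Fin k, i ≠ i' →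
      (some (Sum.inl i') : Hole k l) ∉ C (Sum.inl i) := by
    intro i i' hne' hmem
    have hk3 : 3 ≤ k := by
      rcases Nat.lt_or_ge k 3 with hlt | hge
      · exfalso
        have h1 : k ≤ 1 := by omega
        exact hne' (Fin.ext (by have := i.isLt; have := i'.isLt; omega))
      · exact hge
    obtain ⟨m, hm⟩ : ((Finset.univ : Finset (Fin k)) \ {i, i'}).Nonempty := by
      apply Finset.card_pos.mp
      have h2c : ({i, i'} : Finset (Fin k)).card ≤ 2 :=
        (Finset.card_insert_le _ _).trans (by simp)
      rw [Finset.card_sdiff_of_subset (Finset.subset_univ _), Finset.card_univ, Fintype.card_fin]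
      omega
    simp only [Finset.mem_sdiff, Finset.mem_univ, Finset.mem_insert,
      Finset.mem_singleton, true_and, not_or] at hm
    exact HopfAux.cross_side (hg (Sum.inl i)) (hg (Sum.inl i')) (hg (Sum.inl m))
      (hg (Sum.inr j0)) hM3 (hc2 _) (hc2 _) (hc2 _) (hc2 _)
      (hpp i i' hne') (hpp i m (fun e => hm.1 e.symm)) (hpp i' m (fun e => hm.2 e.symm))
      (hpn i j0) (hpn i' j0) (hpn m j0) hmem
  have hNside : ∀ j j' : Fin l, j ≠ j' →
      (some (Sum.inr j') : Hole k l) ∉ C (Sum.inr j) := by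
    intro j j' hne' hmem
    have hl3 : 3 ≤ l := by
      rcases Nat.lt_or_ge l 3 with hlt | hge
      · exfalso
        have h1 : l ≤ 1 := by omega
        exact hne' (Fin.ext (by have := j.isLt; have := j'.isLt; omega))
      · exact hge
    obtain ⟨m, hm⟩ : ((Finset.univ : Finset (Fin l)) \ {j, j'}).Nonempty := by
      apply Finset.card_pos.mp
      have h2c : ({j, j'} : Finset (Fin l)).card ≤ 2 :=
        (Finset.card_insert_le _ _).trans (by simp)
      rw [Finset.card_sdiff_of_subset (Finset.subset_univ _), Finset.card_univ, Fintype.card_fin]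
      omega
    simp only [Finset.mem_sdiff, Finset.mem_univ, Finset.mem_insert,
      Finset.mem_singleton, true_and, not_or] at hm
    exact HopfAux.cross_side (hg (Sum.inr j)) (hg (Sum.inr j')) (hg (Sum.inr m))
      (hg (Sum.inl i0)) hM3 (hc2 _) (hc2 _) (hc2 _) (hc2 _)
      (hnn j j' hne') (hnn j m (fun e => hm.1 e.symm)) (hnn j' m (fun e => hm.2 e.symm))
      (by rw [HopfAux.jmult_comm']; exact hpn i0 j)
      (by rw [HopfAux.jmult_comm']; exact hpn i0 j')
      (by rw [HopfAux.jmult_comm']; exact hpn i0 m) hmem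
  -- identify the C sets
  have hCp : ∀ i : Fin k, C (Sum.inl i) = insert (sHole k l) (Nset k l) := by
    intro i
    ext a
    constructor
    · intro ha
      rcases a with _ | (i' | j)
      · exact Finset.mem_insert_self _ _
      · by_cases h : i' = i
        · subst h; exact absurd ha (hg (Sum.inl i')).hxC
        · exact absurd ha (hPside i i' (fun e => h e.symm))
      · exact Finset.mem_insert_of_mem (hNmem' j)
    · intro ha
      rcases Finset.mem_insert.mp ha with h | h
      · subst h
        exact (HopfAux.mem_Mset.mp (hg (Sum.inl i)).hCM).2
      · obtain ⟨j, -, rfl⟩ := Finset.mem_image.mp h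
        exact (HopfAux.rel_cross (hg (Sum.inl i)) (hpn i j) (hc2 (Sum.inr j))).1
  have hCn : ∀ j : Fin l, C (Sum.inr j) = insert (sHole k l) (Pset k l) := by
    intro j
    ext a
    constructor
    · intro ha
      rcases a with _ | (i | j')
      · exact Finset.mem_insert_self _ _
      · exact Finset.mem_insert_of_mem (hPmem' i)
      · by_cases h : j' = j
        · subst h; exact absurd ha (hg (Sum.inr j')).hxC
        · exact absurd ha (hNside j j' (fun e => h e.symm))
    · intro ha
      rcases Finset.mem_insert.mp ha with h | h
      · subst h
        exact (HopfAux.mem_Mset.mp (hg (Sum.inr j)).hCM).2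
      · obtain ⟨i, -, rfl⟩ := Finset.mem_image.mp h
        exact (HopfAux.rel_cross (hg (Sum.inr j))
          (by rw [HopfAux.jmult_comm']; exact hpn i j) (hc2 (Sum.inl i))).1
  -- identify the D sets
  have hDp : ∀ i : Fin k, D (Sum.inl i) = {(some (Sum.inl i) : Hole k l)} := by
    intro i
    ext a
    simp only [Finset.mem_singleton]
    constructor
    · intro ha
      rcases a with _ | (i' | j)
      · exact absurd ha (hg (Sum.inl i)).hsD
      · by_cases h : i' = i
        · subst h; rfl
        · exfalso
          have hmem := (HopfAux.rel_same (hg (Sum.inl i)) (hpp i i' (fun e => h e.symm))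
            (hc2 (Sum.inl i'))).mp ha
          rw [hCp i] at hmem
          revert hmem
          simp [sHole, Nset, negHole]
      · exact absurd ha ((HopfAux.rel_cross (hg (Sum.inl i)) (hpn i j) (hc2 (Sum.inr j))).2)
    · rintro rfl
      exact (hg (Sum.inl i)).hxD
  have hDn : ∀ j : Fin l, D (Sum.inr j) = {(some (Sum.inr j) : Hole k l)} := by
    intro j
    ext a
    simp only [Finset.mem_singleton]
    constructor
    · intro ha
      rcases a with _ | (i | j')
      · exact absurd ha (hg (Sum.inr j)).hsD
      · exact absurd ha ((HopfAux.rel_cross (hg (Sum.inr j))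
          (by rw [HopfAux.jmult_comm']; exact hpn i j) (hc2 (Sum.inl i))).2)
      · by_cases h : j' = j
        · subst h; rfl
        · exfalso
          have hmem := (HopfAux.rel_same (hg (Sum.inr j)) (hnn j j' (fun e => h e.symm))
            (hc2 (Sum.inr j'))).mp ha
          rw [hCn j] at hmem
          revert hmem
          simp [sHole, Pset, posHole]
    · rintro rfl
      exact (hg (Sum.inr j)).hxD
  -- structure of M
  have hsNM : insert (sHole k l) (Nset k l) ∈ HopfAux.Mset F := by
    rw [← hCp i0]; exact (hg (Sum.inl i0)).hCM
  have hsPM : insert (sHole k l) (Pset k l) ∈ HopfAux.Mset F := by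
    rw [← hCn j0]; exact (hg (Sum.inr j0)).hCM
  have hPN_ne : insert (sHole k l) (Pset k l) ≠ insert (sHole k l) (Nset k l) := by
    intro e
    have h1 : (some (Sum.inl i0) : Hole k l) ∈ insert (sHole k l) (Pset k l) := hPmem i0
    rw [e] at h1
    revert h1
    simp [sHole, Nset, negHole]
  obtain ⟨M1, hM1⟩ := Multiset.exists_cons_of_mem hsNM
  have hPM1 : insert (sHole k l) (Pset k l) ∈ M1 := by
    have h0 := hsPM
    rw [hM1] at h0
    exact (Multiset.mem_cons.mp h0).resolve_left hPN_ne
  obtain ⟨M2, hM2⟩ := Multiset.exists_cons_of_mem hPM1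
  have hM2card : Multiset.card M2 = 1 := by
    have h0 := hM3
    rw [hM1, hM2] at h0
    simp only [Multiset.card_cons] at h0
    omega
  obtain ⟨X, hX⟩ := Multiset.card_eq_one.mp hM2card
  have hXM : X ∈ HopfAux.Mset F := by
    rw [hM1, hM2, hX]
    simp
  have claimP : ∀ Y ∈ HopfAux.Mset F, Y ≠ insert (sHole k l) (Nset k l) →
      ∀ i : Fin k, (some (Sum.inl i) : Hole k l) ∈ Y := by
    intro Y hY hne' i
    have h0 := (hg (Sum.inl i)).hMC
    rw [hCp i] at h0
    rw [h0] at hY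
    rcases Multiset.mem_cons.mp hY with e | h'
    · exact absurd e hne'
    · exact (Multiset.mem_filter.mp h').2
  have claimN : ∀ Y ∈ HopfAux.Mset F, Y ≠ insert (sHole k l) (Pset k l) →
      ∀ j : Fin l, (some (Sum.inr j) : Hole k l) ∈ Y := by
    intro Y hY hne' j
    have h0 := (hg (Sum.inr j)).hMC
    rw [hCn j] at h0
    rw [h0] at hY
    rcases Multiset.mem_cons.mp hY with e | h'
    · exact absurd e hne'
    · exact (Multiset.mem_filter.mp h').2
  have hnegmem : (some (Sum.inr j0) : Hole k l) ∈ insert (sHole k l) (Nset k l) := hNmem j0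
  have hnegnot : (some (Sum.inr j0) : Hole k l) ∉ insert (sHole k l) (Pset k l) := by
    simp [sHole, Pset, posHole]
  have hposmem : (some (Sum.inl i0) : Hole k l) ∈ insert (sHole k l) (Pset k l) := hPmem i0
  have hposnot : (some (Sum.inl i0) : Hole k l) ∉ insert (sHole k l) (Nset k l) := by
    simp [sHole, Nset, negHole]
  have hXsP : X ≠ insert (sHole k l) (Pset k l) := by
    intro e
    have hc := hc2 (Sum.inr j0)
    rw [hM1, hM2, hX, e] at hc
    simp [Multiset.filter_cons, Multiset.filter_singleton, hnegmem, hnegnot,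
      Multiset.card_add] at hc
  have hXsN : X ≠ insert (sHole k l) (Nset k l) := by
    intro e
    have hc := hc2 (Sum.inl i0)
    rw [hM1, hM2, hX, e] at hc
    simp [Multiset.filter_cons, Multiset.filter_singleton, hposmem, hposnot,
      Multiset.card_add] at hc
  have hXuniv : X = Finset.univ := by
    apply Finset.eq_univ_iff_forall.mpr
    intro a
    rcases a with _ | (i | j)
    · exact (HopfAux.mem_Mset.mp hXM).2
    · exact claimP X hXM hXsN i
    · exact claimN X hXM hXsP j
  have hMeq : HopfAux.Mset F = insert (sHole k l) (Nset k l) ::ₘ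
      insert (sHole k l) (Pset k l) ::ₘ {(Finset.univ : Finset (Hole k l))} := by
    rw [hM1, hM2, hX, hXuniv]
  -- the complement of M in F
  have hsplit : HopfAux.Mset F + F.filter (fun A => ¬ (none : Hole k l) ∈ A) = F :=
    Multiset.filter_add_not _ F
  have hcntP : ∀ i : Fin k, F.count {(some (Sum.inl i) : Hole k l)} = 1 := by
    intro i
    have h4 := (hg (Sum.inl i)).hFD
    rw [hDp i] at h4
    have hT0 : Multiset.count ({(some (Sum.inl i) : Hole k l)} : Finset (Hole k l))
        ((HopfAux.Mset F).filter (fun A => (some (Sum.inl i) : Hole k l) ∈ A)) = 0 := by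
      rw [Multiset.count_eq_zero]
      intro hmem
      have h5 := (HopfAux.mem_Mset.mp (Multiset.mem_of_le (Multiset.filter_le _ _) hmem)).2
      simp at h5
    have hcc := congrArg (Multiset.count ({(some (Sum.inl i) : Hole k l)} : Finset (Hole k l))) h4
    rw [Multiset.count_filter, if_pos (Finset.mem_singleton_self _),
      Multiset.count_cons_self, hT0] at hcc
    exact hcc
  have hcntN : ∀ j : Fin l, F.count {(some (Sum.inr j) : Hole k l)} = 1 := by
    intro j
    have h4 := (hg (Sum.inr j)).hFD
    rw [hDn j] at h4
    have hT0 : Multiset.count ({(some (Sum.inr j) : Hole k l)} : Finset (Hole k l))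
        ((HopfAux.Mset F).filter (fun A => (some (Sum.inr j) : Hole k l) ∈ A)) = 0 := by
      rw [Multiset.count_eq_zero]
      intro hmem
      have h5 := (HopfAux.mem_Mset.mp (Multiset.mem_of_le (Multiset.filter_le _ _) hmem)).2
      simp at h5
    have hcc := congrArg (Multiset.count ({(some (Sum.inr j) : Hole k l)} : Finset (Hole k l))) h4
    rw [Multiset.count_filter, if_pos (Finset.mem_singleton_self _),
      Multiset.count_cons_self, hT0] at hcc
    exact hcc
  have hRclass : ∀ Y ∈ F.filter (fun A => ¬ (none : Hole k l) ∈ A),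
      (∃ i : Fin k, Y = {(some (Sum.inl i) : Hole k l)}) ∨
      (∃ j : Fin l, Y = {(some (Sum.inr j) : Hole k l)}) := by
    intro Y hY
    have hYF : Y ∈ F := Multiset.mem_of_le (Multiset.filter_le _ _) hY
    have hYs : (none : Hole k l) ∉ Y := (Multiset.mem_filter.mp hY).2
    obtain ⟨a, ha⟩ := hne Y hYF
    rcases a with _ | (i | j)
    · exact absurd ha hYs
    · left
      refine ⟨i, ?_⟩
      have hmem : Y ∈ F.filter (fun A => (some (Sum.inl i) : Hole k l) ∈ A) :=
        Multiset.mem_filter.mpr ⟨hYF, ha⟩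
      rw [(hg (Sum.inl i)).hFD] at hmem
      rcases Multiset.mem_cons.mp hmem with e | h'
      · rw [e]; exact hDp i
      · exact absurd (HopfAux.mem_Mset.mp (Multiset.mem_filter.mp h').1).2 hYs
    · right
      refine ⟨j, ?_⟩
      have hmem : Y ∈ F.filter (fun A => (some (Sum.inr j) : Hole k l) ∈ A) :=
        Multiset.mem_filter.mpr ⟨hYF, ha⟩
      rw [(hg (Sum.inr j)).hFD] at hmem
      rcases Multiset.mem_cons.mp hmem with e | h'
      · rw [e]; exact hDn j
      · exact absurd (HopfAux.mem_Mset.mp (Multiset.mem_filter.mp h').1).2 hYs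
  have hTnodup : (((Pset k l ∪ Nset k l)).val.map
      (fun x => ({x} : Finset (Hole k l)))).Nodup :=
    Multiset.Nodup.map Finset.singleton_injective (Pset k l ∪ Nset k l).nodup
  have hRT : F.filter (fun A => ¬ (none : Hole k l) ∈ A)
      = ((Pset k l ∪ Nset k l)).val.map (fun x => ({x} : Finset (Hole k l))) := by
    refine Multiset.ext.mpr fun a => ?_
    by_cases haT : a ∈ ((Pset k l ∪ Nset k l)).val.map (fun x => ({x} : Finset (Hole k l)))
    · have hcT := Multiset.count_eq_one_of_mem hTnodup haT
      obtain ⟨x, hx, rfl⟩ := Multiset.mem_map.mp haT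
      have hx' : x ∈ Pset k l ∪ Nset k l := hx
      rw [hcT, Multiset.count_filter]
      rcases Finset.mem_union.mp hx' with h | h
      · obtain ⟨i, -, rfl⟩ := Finset.mem_image.mp h
        rw [if_pos (by simp [posHole])]
        exact hcntP i
      · obtain ⟨j, -, rfl⟩ := Finset.mem_image.mp h
        rw [if_pos (by simp [negHole])]
        exact hcntN j
    · rw [Multiset.count_eq_zero_of_notMem haT, Multiset.count_eq_zero]
      intro haR
      rcases hRclass a haR with ⟨i, rfl⟩ | ⟨j, rfl⟩
      · exact haT (Multiset.mem_map.mpr ⟨some (Sum.inl i),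
          Finset.mem_val.mpr (Finset.mem_union_left _ (hPmem' i)), rfl⟩)
      · exact haT (Multiset.mem_map.mpr ⟨some (Sum.inr j),
          Finset.mem_val.mpr (Finset.mem_union_right _ (hNmem' j)), rfl⟩)
  have hFeq : F = Fstd k l := by
    rw [← hsplit, hMeq, hRT]
    show insert (sHole k l) (Nset k l) ::ₘ insert (sHole k l) (Pset k l) ::ₘ
        ({(Finset.univ : Finset (Hole k l))} : Multiset (Finset (Hole k l)))
        + ((Pset k l ∪ Nset k l)).val.map (fun x => ({x} : Finset (Hole k l))) = Fstd k l
    rw [Multiset.cons_add, Multiset.cons_add, Multiset.singleton_add]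
    show _ = (Finset.univ : Finset (Hole k l)) ::ₘ insert (sHole k l) (Pset k l) ::ₘ
      insert (sHole k l) (Nset k l) ::ₘ ((Pset k l ∪ Nset k l)).val.map (fun x => ({x} : Finset (Hole k l)))
    rw [Multiset.cons_swap (insert (sHole k l) (Nset k l)) (insert (sHole k l) (Pset k l)),
      Multiset.cons_swap (insert (sHole k l) (Nset k l)) (Finset.univ : Finset (Hole k l)),
      Multiset.cons_swap (insert (sHole k l) (Pset k l)) (Finset.univ : Finset (Hole k l))]
  refine ⟨hFeq, ?_⟩
  have hinjP : Function.Injective (posHole k l) := by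
    intro a b h
    simpa [posHole] using h
  have hinjN : Function.Injective (negHole k l) := by
    intro a b h
    simpa [negHole] using h
  have hdisj : Disjoint (Pset k l) (Nset k l) := by
    rw [Finset.disjoint_left]
    intro a ha hb
    obtain ⟨i, -, rfl⟩ := Finset.mem_image.mp ha
    obtain ⟨j, -, e⟩ := Finset.mem_image.mp hb
    simp [posHole, negHole] at e
  have hcardPN : (Pset k l ∪ Nset k l).card = k + l := by
    rw [Finset.card_union_of_disjoint hdisj, Pset, Nset,
      Finset.card_image_of_injective _ hinjP, Finset.card_image_of_injective _ hinjN,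
      Finset.card_univ, Finset.card_univ, Fintype.card_fin, Fintype.card_fin]
  rw [hFeq]
  show Multiset.card (Fstd k l) = k + l + 3
  rw [Fstd]
  simp only [Multiset.card_cons, Multiset.card_map]
  have hval : Multiset.card (Pset k l ∪ Nset k l).val = k + l := hcardPN
  omega
end

section
/- Assume l = 2, k ≥ 1 and k ≠ 2. Then a multiset F of nonempty subsets of H satisfies the Hopf multiplicity data if and only if F = F_std or F = F_lan. In particular there are exactly two configurations satisfying the Hopf multiplicity data. -/
/-- The lantern configuration `F_lan` (for `l = 2`): the sets `{s} ∪ P ∪ {n₁}`,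
`{s} ∪ P ∪ {n₂}`, `{n₁, n₂}`, `{s, n₁, n₂}`, and a singleton `{p}` for each `p ∈ P`. -/
def Flan (k : ℕ) : Multiset (Finset (Hole k 2)) :=
  insert (sHole k 2) (Pset k 2 ∪ {negHole k 2 0}) ::ₘ
  insert (sHole k 2) (Pset k 2 ∪ {negHole k 2 1}) ::ₘ
  ({negHole k 2 0, negHole k 2 1} : Finset (Hole k 2)) ::ₘ
  ({sHole k 2, negHole k 2 0, negHole k 2 1} : Finset (Hole k 2)) ::ₘ
  ((Pset k 2).val.map (fun x => {x}))

section helpers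
variable {k l : ℕ}

@[simp] lemma mult_cons (A : Finset (Hole k l)) (F : Multiset (Finset (Hole k l))) (x : Hole k l) :
    mult (A ::ₘ F) x = (if x ∈ A then 1 else 0) + mult F x := by
  simp only [mult, Multiset.filter_cons]
  split <;> simp [Multiset.singleton_add, Nat.add_comm]

@[simp] lemma jmult_cons (A : Finset (Hole k l)) (F : Multiset (Finset (Hole k l))) (x y : Hole k l) :
    jmult (A ::ₘ F) x y = (if x ∈ A ∧ y ∈ A then 1 else 0) + jmult F x y := by
  simp only [jmult, Multiset.filter_cons]
  split <;> simp [Multiset.singleton_add, Nat.add_comm]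

@[simp] lemma mult_add (F G : Multiset (Finset (Hole k l))) (x : Hole k l) :
    mult (F + G) x = mult F x + mult G x := by
  simp [mult, Multiset.filter_add]

@[simp] lemma jmult_add (F G : Multiset (Finset (Hole k l))) (x y : Hole k l) :
    jmult (F + G) x y = jmult F x y + jmult G x y := by
  simp [jmult, Multiset.filter_add]

@[simp] lemma mult_zero (x : Hole k l) : mult (0 : Multiset (Finset (Hole k l))) x = 0 := rfl
@[simp] lemma jmult_zero (x y : Hole k l) : jmult (0 : Multiset (Finset (Hole k l))) x y = 0 := rfl

@[simp] lemma mult_map_singleton (S : Finset (Hole k l)) (x : Hole k l) :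
    mult (S.val.map (fun y => ({y} : Finset (Hole k l)))) x = if x ∈ S then 1 else 0 := by
  simp only [mult, Multiset.filter_map, Multiset.card_map, Function.comp]
  rw [Multiset.filter_congr (fun y _ => by simp [eq_comm] : ∀ y ∈ S.val, (x ∈ ({y} : Finset (Hole k l))) ↔ x = y)]
  rw [← Multiset.count_eq_card_filter_eq, Multiset.count_eq_of_nodup S.nodup]
  rfl

@[simp] lemma jmult_map_singleton (S : Finset (Hole k l)) (x y : Hole k l) :
    jmult (S.val.map (fun y => ({y} : Finset (Hole k l)))) x y =
      if x = y ∧ x ∈ S then 1 else 0 := by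
  simp only [jmult, Multiset.filter_map, Multiset.card_map]
  rw [Multiset.filter_congr (fun z _ => by
      constructor
      · rintro ⟨h1, h2⟩
        simp only [Function.comp, Finset.mem_singleton] at h1 h2
        exact ⟨h1.trans h2.symm, h1⟩
      · rintro ⟨rfl, rfl⟩; simp [Function.comp]
    : ∀ z ∈ S.val, ((fun A => x ∈ A ∧ y ∈ A) ∘ fun y => ({y} : Finset (Hole k l))) z ↔ x = y ∧ x = z)]
  by_cases hxy : x = y
  · subst hxy
    rw [Multiset.filter_congr (fun z _ => by simp : ∀ z ∈ S.val, (x = x ∧ x = z) ↔ x = z)]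
    rw [← Multiset.count_eq_card_filter_eq, Multiset.count_eq_of_nodup S.nodup]
    simp only [eq_self_iff_true, true_and, Finset.mem_def]
  · rw [Multiset.filter_congr (fun z _ => by simp [hxy] : ∀ z ∈ S.val, (x = y ∧ x = z) ↔ False)]
    rw [Multiset.filter_eq_nil.mpr (fun z _ => not_false)]
    rw [if_neg (fun h => hxy h.1)]
    rfl
end helpers

section mem
variable {k l : ℕ} {i i' : Fin k} {j j' : Fin l}

@[simp] lemma pos_mem_Pset : posHole k l i ∈ Pset k l := by
  simp [Pset, Finset.mem_image]
@[simp] lemma neg_mem_Nset : negHole k l j ∈ Nset k l := by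
  simp [Nset, Finset.mem_image]
@[simp] lemma s_mem_Pset : (sHole k l ∈ Pset k l) ↔ False := by
  simp [Pset, Finset.mem_image, sHole, posHole]
@[simp] lemma s_mem_Nset : (sHole k l ∈ Nset k l) ↔ False := by
  simp [Nset, Finset.mem_image, sHole, negHole]
@[simp] lemma neg_mem_Pset : (negHole k l j ∈ Pset k l) ↔ False := by
  simp [Pset, Finset.mem_image, negHole, posHole]
@[simp] lemma pos_mem_Nset : (posHole k l i ∈ Nset k l) ↔ False := by
  simp [Nset, Finset.mem_image, negHole, posHole]
@[simp] lemma posHole_inj : posHole k l i = posHole k l i' ↔ i = i' := by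
  simp [posHole]
@[simp] lemma negHole_inj : negHole k l j = negHole k l j' ↔ j = j' := by
  simp [negHole]
@[simp] lemma pos_ne_neg : (posHole k l i = negHole k l j) ↔ False := by
  simp [posHole, negHole]
@[simp] lemma neg_ne_pos : (negHole k l j = posHole k l i) ↔ False := by
  simp [posHole, negHole]
@[simp] lemma s_ne_pos : (sHole k l = posHole k l i) ↔ False := by
  simp [posHole, sHole]
@[simp] lemma pos_ne_s : (posHole k l i = sHole k l) ↔ False := by
  simp [posHole, sHole]
@[simp] lemma s_ne_neg : (sHole k l = negHole k l j) ↔ False := by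
  simp [negHole, sHole]
@[simp] lemma neg_ne_s : (negHole k l j = sHole k l) ↔ False := by
  simp [negHole, sHole]

lemma hole_cases (x : Hole k l) :
    x = sHole k l ∨ (∃ i, x = posHole k l i) ∨ (∃ j, x = negHole k l j) := by
  rcases x with _ | (i | j)
  · exact Or.inl rfl
  · exact Or.inr (Or.inl ⟨i, rfl⟩)
  · exact Or.inr (Or.inr ⟨j, rfl⟩)

end mem

section prelim
variable {k l : ℕ}

lemma code_facts {A B C : Prop} [Decidable A] [Decidable B] [Decidable C]
    (h : (if A then 1 else 0) + (if B then 1 else 0) + (if C then 1 else 0) = 2) :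
    ((if A then 4 else 0) + (if B then 2 else 0) + (if C then 1 else 0) = 3 ∨
     (if A then 4 else 0) + (if B then 2 else 0) + (if C then 1 else 0) = 5 ∨
     (if A then 4 else 0) + (if B then 2 else 0) + (if C then 1 else 0) = 6) ∧
    (A ↔ (if A then 4 else 0) + (if B then 2 else 0) + (if C then 1 else 0) ≠ 3) ∧
    (B ↔ (if A then 4 else 0) + (if B then 2 else 0) + (if C then 1 else 0) ≠ 5) ∧
    (C ↔ (if A then 4 else 0) + (if B then 2 else 0) + (if C then 1 else 0) ≠ 6) := by
  by_cases hA : A <;> by_cases hB : B <;> by_cases hC : C <;> simp_all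

lemma pair_code {A B C A' B' C' : Prop} [Decidable A] [Decidable B] [Decidable C]
    [Decidable A'] [Decidable B'] [Decidable C']
    (h : (if A then 1 else 0) + (if B then 1 else 0) + (if C then 1 else 0) = 2)
    (h' : (if A' then 1 else 0) + (if B' then 1 else 0) + (if C' then 1 else 0) = 2) :
    (if A ∧ A' then 1 else 0) + (if B ∧ B' then 1 else 0) + (if C ∧ C' then 1 else 0) =
      if ((if A then 4 else 0) + (if B then 2 else 0) + (if C then 1 else 0) =
          (if A' then 4 else 0) + (if B' then 2 else 0) + (if C' then 1 else 0)) then 2 else 1 := by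
  by_cases hA : A <;> by_cases hB : B <;> by_cases hC : C <;>
    by_cases hA' : A' <;> by_cases hB' : B' <;> by_cases hC' : C' <;> simp_all

lemma jmult_symm (G : Multiset (Finset (Hole k l))) (x y : Hole k l) :
    jmult G x y = jmult G y x := by
  unfold jmult
  rw [Multiset.filter_congr (fun A _ => and_comm)]

lemma jmult_of_single {G : Multiset (Finset (Hole k l))} {x : Hole k l} {B : Finset (Hole k l)}
    (h : G.filter (fun A => x ∈ A) = {B}) (y : Hole k l) :
    jmult G x y = if y ∈ B then 1 else 0 := by
  unfold jmult
  rw [Multiset.filter_congr (fun A _ => and_comm (a := x ∈ A)), ← Multiset.filter_filter, h]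
  rw [show ({B} : Multiset (Finset (Hole k l))) = B ::ₘ 0 from rfl, Multiset.filter_cons]
  split <;> simp

lemma block_mem {G : Multiset (Finset (Hole k l))} {x : Hole k l} {B : Finset (Hole k l)}
    (h : G.filter (fun A => x ∈ A) = {B}) : x ∈ B ∧ B ∈ G := by
  have : B ∈ G.filter (fun A => x ∈ A) := by rw [h]; exact Multiset.mem_singleton_self B
  exact ⟨(Multiset.mem_filter.mp this).2, (Multiset.mem_filter.mp this).1⟩

lemma block_eq {G : Multiset (Finset (Hole k l))} {x : Hole k l} {B A : Finset (Hole k l)}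
    (h : G.filter (fun A => x ∈ A) = {B}) (hA : A ∈ G) (hxA : x ∈ A) : A = B := by
  have : A ∈ G.filter (fun A => x ∈ A) := Multiset.mem_filter.mpr ⟨hA, hxA⟩
  rw [h] at this; exact Multiset.mem_singleton.mp this

lemma block_count {G : Multiset (Finset (Hole k l))} {x : Hole k l} {B : Finset (Hole k l)}
    (h : G.filter (fun A => x ∈ A) = {B}) : G.count B = 1 := by
  have hx : x ∈ B := (block_mem h).1
  have := Multiset.count_filter (p := fun A => x ∈ A) (s := G) (a := B)
  rw [h, if_pos hx, Multiset.count_singleton, if_pos rfl] at this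
  exact this.symm

lemma jmult_ne_zero {G : Multiset (Finset (Hole k l))} {x y : Hole k l} {A : Finset (Hole k l)}
    (hA : A ∈ G) (hx : x ∈ A) (hy : y ∈ A) : jmult G x y ≠ 0 := by
  intro h0
  have : A ∈ G.filter (fun A => x ∈ A ∧ y ∈ A) := Multiset.mem_filter.mpr ⟨hA, hx, hy⟩
  rw [Multiset.card_eq_zero.mp h0] at this
  exact absurd this (Multiset.notMem_zero A)

lemma mult_eq_card_filter (G : Multiset (Finset (Hole k l))) (x : Hole k l) :
    mult G x = (G.filter (fun A => x ∈ A)).card := rfl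

end prelim

section recon
variable {k : ℕ}

lemma all_mem_union (x : Hole k 2) (hx : x ≠ sHole k 2) : x ∈ Pset k 2 ∪ Nset k 2 := by
  rcases hole_cases x with rfl | ⟨i, rfl⟩ | ⟨j, rfl⟩
  · exact absurd rfl hx
  · exact Finset.mem_union_left _ pos_mem_Pset
  · exact Finset.mem_union_right _ neg_mem_Nset

lemma count_map_singleton (S : Finset (Hole k 2)) (A : Finset (Hole k 2)) :
    (S.val.map (fun x => ({x} : Finset (Hole k 2)))).count A =
      if ∃ x ∈ S, A = {x} then 1 else 0 := by
  rw [Multiset.count_map]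
  split
  · rename_i h
    obtain ⟨x, hxS, rfl⟩ := h
    rw [Multiset.filter_congr (fun z _ => by
      simp [Finset.singleton_inj] : ∀ z ∈ S.val, ({x} : Finset (Hole k 2)) = {z} ↔ x = z)]
    rw [← Multiset.count_eq_card_filter_eq, Multiset.count_eq_of_nodup S.nodup]
    simp [Finset.mem_def.mp hxS]
  · rename_i h
    rw [Multiset.filter_congr (fun z hz => by
      simp only [iff_false]
      exact fun hAz => h ⟨z, Finset.mem_def.mpr hz, hAz⟩ : ∀ z ∈ S.val, (A = {z}) ↔ False)]
    rw [Multiset.filter_eq_nil.mpr (fun z _ => not_false)]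
    rfl

/-- Reconstruction of the `s`-free part in the standard case. -/
lemma G_recon_std (G : Multiset (Finset (Hole k 2)))
    (hnon : ∀ A ∈ G, A.Nonempty) (hsf : ∀ A ∈ G, sHole k 2 ∉ A)
    (hblk : ∀ x : Hole k 2, x ≠ sHole k 2 →
      G.filter (fun A => x ∈ A) = {({x} : Finset (Hole k 2))}) :
    G = (Pset k 2 ∪ Nset k 2).val.map (fun x => {x}) := by
  ext A
  rw [count_map_singleton]
  split
  · rename_i h
    obtain ⟨x, hxS, rfl⟩ := h
    have hxs : x ≠ sHole k 2 := by
      rintro rfl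
      rcases Finset.mem_union.mp hxS with h | h
      · exact s_mem_Pset.mp h
      · exact s_mem_Nset.mp h
    exact block_count (hblk x hxs)
  · rename_i h
    by_contra hc
    have hA : A ∈ G := Multiset.count_pos.mp (Nat.pos_of_ne_zero hc)
    obtain ⟨x, hxA⟩ := hnon A hA
    have hxs : x ≠ sHole k 2 := fun hh => hsf A hA (hh ▸ hxA)
    have := block_eq (hblk x hxs) hA hxA
    exact h ⟨x, all_mem_union x hxs, this⟩

end recon

section recon2
variable {k : ℕ}

lemma G_recon_lan (G : Multiset (Finset (Hole k 2)))
    (hnon : ∀ A ∈ G, A.Nonempty) (hsf : ∀ A ∈ G, sHole k 2 ∉ A)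
    (hbn : ∀ j : Fin 2, G.filter (fun A => negHole k 2 j ∈ A) =
      {({negHole k 2 0, negHole k 2 1} : Finset (Hole k 2))})
    (hbp : ∀ i : Fin k, G.filter (fun A => posHole k 2 i ∈ A) =
      {({posHole k 2 i} : Finset (Hole k 2))}) :
    G = ({negHole k 2 0, negHole k 2 1} : Finset (Hole k 2)) ::ₘ
        (Pset k 2).val.map (fun x => {x}) := by
  have hDP : ∀ x : Hole k 2, ({negHole k 2 0, negHole k 2 1} : Finset (Hole k 2)) ≠ {x} := by
    intro x h
    have h0 : negHole k 2 0 ∈ ({x} : Finset (Hole k 2)) := h ▸ (by simp)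
    have h1 : negHole k 2 1 ∈ ({x} : Finset (Hole k 2)) := h ▸ (by simp)
    rw [Finset.mem_singleton] at h0 h1
    exact absurd (negHole_inj.mp (h0.trans h1.symm)) (by decide)
  ext A
  rw [Multiset.count_cons, count_map_singleton]
  by_cases hD : A = ({negHole k 2 0, negHole k 2 1} : Finset (Hole k 2))
  · subst hD
    rw [if_pos rfl, if_neg (by rintro ⟨x, _, h⟩; exact hDP x h)]
    exact block_count (hbn 0)
  · rw [if_neg hD]
    by_cases hP : ∃ x ∈ Pset k 2, A = {x}
    · obtain ⟨x, hx, rfl⟩ := hP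
      obtain ⟨i, _, rfl⟩ := Finset.mem_image.mp hx
      rw [if_pos ⟨posHole k 2 i, pos_mem_Pset, rfl⟩]
      exact block_count (hbp i)
    · rw [if_neg hP]
      by_contra hc
      have hA : A ∈ G := Multiset.count_pos.mp (Nat.pos_of_ne_zero (by simpa using hc))
      obtain ⟨x, hxA⟩ := hnon A hA
      rcases hole_cases x with rfl | ⟨i, rfl⟩ | ⟨j, rfl⟩
      · exact hsf A hA hxA
      · exact hP ⟨posHole k 2 i, pos_mem_Pset, block_eq (hbp i) hA hxA⟩
      · exact hD (block_eq (hbn j) hA hxA)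

end recon2

section perm
variable {α : Type*} (x y z : α) (t : Multiset α)

lemma p213 : x ::ₘ y ::ₘ z ::ₘ t = y ::ₘ x ::ₘ z ::ₘ t := Multiset.cons_swap x y _
lemma p132 : x ::ₘ y ::ₘ z ::ₘ t = x ::ₘ z ::ₘ y ::ₘ t := by rw [Multiset.cons_swap y z]
lemma p231 : x ::ₘ y ::ₘ z ::ₘ t = y ::ₘ z ::ₘ x ::ₘ t := by
  rw [Multiset.cons_swap x y, Multiset.cons_swap x z]
lemma p312 : x ::ₘ y ::ₘ z ::ₘ t = z ::ₘ x ::ₘ y ::ₘ t := by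
  rw [Multiset.cons_swap y z, Multiset.cons_swap x z]
lemma p321 : x ::ₘ y ::ₘ z ::ₘ t = z ::ₘ y ::ₘ x ::ₘ t := by
  rw [Multiset.cons_swap x y, Multiset.cons_swap x z, Multiset.cons_swap y z]

end perm


/-- auxiliary: membership code of `x` w.r.t. three sets. -/
def code {k l : ℕ} (a b c : Finset (Hole k l)) (x : Hole k l) : ℕ :=
  (if x ∈ a then 4 else 0) + (if x ∈ b then 2 else 0) + (if x ∈ c then 1 else 0)

lemma code_facts' {k l : ℕ} {a b c : Finset (Hole k l)} {x : Hole k l}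
    (h : (if x ∈ a then 1 else 0) + (if x ∈ b then 1 else 0) + (if x ∈ c then 1 else 0) = 2) :
    (code a b c x = 3 ∨ code a b c x = 5 ∨ code a b c x = 6) ∧
    (x ∈ a ↔ code a b c x ≠ 3) ∧ (x ∈ b ↔ code a b c x ≠ 5) ∧ (x ∈ c ↔ code a b c x ≠ 6) :=
  code_facts h

lemma pair_code' {k l : ℕ} {a b c : Finset (Hole k l)} {x y : Hole k l}
    (h : (if x ∈ a then 1 else 0) + (if x ∈ b then 1 else 0) + (if x ∈ c then 1 else 0) = 2)
    (h' : (if y ∈ a then 1 else 0) + (if y ∈ b then 1 else 0) + (if y ∈ c then 1 else 0) = 2) :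
    (if x ∈ a ∧ y ∈ a then 1 else 0) + (if x ∈ b ∧ y ∈ b then 1 else 0) +
      (if x ∈ c ∧ y ∈ c then 1 else 0) =
      if code a b c x = code a b c y then 2 else 1 :=
  pair_code h h'

lemma fstd_nonempty {k l : ℕ} : ∀ A ∈ Fstd k l, A.Nonempty := by
  intro A hA
  simp only [Fstd, Multiset.mem_cons, Multiset.mem_map, Finset.mem_val] at hA
  rcases hA with rfl | rfl | rfl | ⟨x, _, rfl⟩
  · exact ⟨sHole k l, Finset.mem_univ _⟩
  · exact ⟨sHole k l, Finset.mem_insert_self _ _⟩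
  · exact ⟨sHole k l, Finset.mem_insert_self _ _⟩
  · exact ⟨x, Finset.mem_singleton_self x⟩

lemma flan_nonempty {k : ℕ} : ∀ A ∈ Flan k, A.Nonempty := by
  intro A hA
  simp only [Flan, Multiset.mem_cons, Multiset.mem_map, Finset.mem_val] at hA
  rcases hA with rfl | rfl | rfl | rfl | ⟨x, _, rfl⟩
  · exact ⟨sHole k 2, Finset.mem_insert_self _ _⟩
  · exact ⟨sHole k 2, Finset.mem_insert_self _ _⟩
  · exact ⟨negHole k 2 0, Finset.mem_insert_self _ _⟩
  · exact ⟨sHole k 2, Finset.mem_insert_self _ _⟩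
  · exact ⟨x, Finset.mem_singleton_self x⟩

lemma hopf_std {k : ℕ} : HopfData (Fstd k 2) := by
  refine ⟨?_, ?_, ?_, ?_⟩
  · intro x
    rcases hole_cases x with rfl | ⟨i, rfl⟩ | ⟨j, rfl⟩ <;>
      simp [Fstd, -Finset.union_val]
  · intro x y hxy hx hy
    simp only [Finset.mem_insert] at hx hy
    rcases hx with rfl | hx
    · rcases hy with rfl | hy
      · exact absurd rfl hxy
      · rcases (Finset.mem_image.mp hy) with ⟨i, _, rfl⟩
        simp [Fstd, -Finset.union_val]
    · rcases (Finset.mem_image.mp hx) with ⟨i, _, rfl⟩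
      rcases hy with rfl | hy
      · simp [Fstd, -Finset.union_val]
      · rcases (Finset.mem_image.mp hy) with ⟨i', _, rfl⟩
        have : i ≠ i' := fun h => hxy (by rw [h])
        simp [Fstd, this, -Finset.union_val]
  · intro x y hxy hx hy
    simp only [Finset.mem_insert] at hx hy
    rcases hx with rfl | hx
    · rcases hy with rfl | hy
      · exact absurd rfl hxy
      · rcases (Finset.mem_image.mp hy) with ⟨j, _, rfl⟩
        simp [Fstd, -Finset.union_val]
    · rcases (Finset.mem_image.mp hx) with ⟨j, _, rfl⟩
      rcases hy with rfl | hy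
      · simp [Fstd, -Finset.union_val]
      · rcases (Finset.mem_image.mp hy) with ⟨j', _, rfl⟩
        have : j ≠ j' := fun h => hxy (by rw [h])
        simp [Fstd, this, -Finset.union_val]
  · intro x y hx hy
    rcases (Finset.mem_image.mp hx) with ⟨i, _, rfl⟩
    rcases (Finset.mem_image.mp hy) with ⟨j, _, rfl⟩
    simp [Fstd, -Finset.union_val]

lemma hopf_lan {k : ℕ} : HopfData (Flan k) := by
  have h01 : (0 : Fin 2) ≠ 1 := by decide
  refine ⟨?_, ?_, ?_, ?_⟩
  · intro x
    rcases hole_cases x with rfl | ⟨i, rfl⟩ | ⟨j, rfl⟩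
    · simp [Flan]
    · simp [Flan]
    · fin_cases j <;> simp [Flan, h01, h01.symm]
  · intro x y hxy hx hy
    simp only [Finset.mem_insert] at hx hy
    rcases hx with rfl | hx
    · rcases hy with rfl | hy
      · exact absurd rfl hxy
      · rcases (Finset.mem_image.mp hy) with ⟨i, _, rfl⟩
        simp [Flan]
    · rcases (Finset.mem_image.mp hx) with ⟨i, _, rfl⟩
      rcases hy with rfl | hy
      · simp [Flan]
      · rcases (Finset.mem_image.mp hy) with ⟨i', _, rfl⟩
        have : i ≠ i' := fun h => hxy (by rw [h])
        simp [Flan, this]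
  · intro x y hxy hx hy
    simp only [Finset.mem_insert] at hx hy
    rcases hx with rfl | hx
    · rcases hy with rfl | hy
      · exact absurd rfl hxy
      · rcases (Finset.mem_image.mp hy) with ⟨j, _, rfl⟩
        fin_cases j <;> simp [Flan, h01, h01.symm]
    · rcases (Finset.mem_image.mp hx) with ⟨j, _, rfl⟩
      rcases hy with rfl | hy
      · fin_cases j <;> simp [Flan, h01, h01.symm]
      · rcases (Finset.mem_image.mp hy) with ⟨j', _, rfl⟩
        have hjj : j ≠ j' := fun h => hxy (by rw [h])
        fin_cases j <;> fin_cases j' <;> simp_all [Flan, h01, h01.symm]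
  · intro x y hx hy
    rcases (Finset.mem_image.mp hx) with ⟨i, _, rfl⟩
    rcases (Finset.mem_image.mp hy) with ⟨j, _, rfl⟩
    fin_cases j <;> simp [Flan, h01, h01.symm]

lemma fstd_ne_flan {k : ℕ} : Fstd k 2 ≠ Flan k := by
  intro h
  have h1 : Multiset.card (Fstd k 2) = Multiset.card (Flan k) := by rw [h]
  simp only [Fstd, Flan, Multiset.card_map, Multiset.card_cons, ← Finset.card_def] at h1
  have hP : (Pset k 2).card = k := by
    rw [Pset, Finset.card_image_of_injective _ (fun a b hab => by
      simpa [posHole] using hab)]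
    simp
  have hN : (Nset k 2).card = 2 := by
    rw [Nset, Finset.card_image_of_injective _ (fun a b hab => by
      simpa [negHole] using hab)]
    simp
  have hPN : (Pset k 2 ∪ Nset k 2).card = k + 2 := by
    rw [Finset.card_union_of_disjoint, hP, hN]
    rw [Finset.disjoint_left]
    intro a ha hb
    rcases Finset.mem_image.mp ha with ⟨i, _, rfl⟩
    exact (pos_mem_Nset).mp hb
  rw [hPN, hP] at h1
  omega



section seteq
variable {k : ℕ}

lemma set_eq_univ (A : Finset (Hole k 2)) (hs : sHole k 2 ∈ A)
    (hp : ∀ i, posHole k 2 i ∈ A) (hn : ∀ j, negHole k 2 j ∈ A) : A = Finset.univ := by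
  ext y
  simp only [Finset.mem_univ, iff_true]
  rcases hole_cases y with rfl | ⟨i, rfl⟩ | ⟨j, rfl⟩
  exacts [hs, hp i, hn j]

lemma set_eq_sP (A : Finset (Hole k 2)) (hs : sHole k 2 ∈ A)
    (hp : ∀ i, posHole k 2 i ∈ A) (hn : ∀ j, negHole k 2 j ∉ A) :
    A = insert (sHole k 2) (Pset k 2) := by
  ext y
  rcases hole_cases y with rfl | ⟨i, rfl⟩ | ⟨j, rfl⟩
  · simp [hs]
  · simp [hp i, Finset.mem_insert]
  · simp [hn j, Finset.mem_insert]

lemma set_eq_sN (A : Finset (Hole k 2)) (hs : sHole k 2 ∈ A)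
    (hp : ∀ i, posHole k 2 i ∉ A) (hn : ∀ j, negHole k 2 j ∈ A) :
    A = insert (sHole k 2) (Nset k 2) := by
  ext y
  rcases hole_cases y with rfl | ⟨i, rfl⟩ | ⟨j, rfl⟩
  · simp [hs]
  · simp [hp i, Finset.mem_insert]
  · simp [hn j, Finset.mem_insert]

lemma set_eq_sPn (j0 : Fin 2) (A : Finset (Hole k 2)) (hs : sHole k 2 ∈ A)
    (hp : ∀ i, posHole k 2 i ∈ A) (hn : ∀ j, negHole k 2 j ∈ A ↔ j = j0) :
    A = insert (sHole k 2) (Pset k 2 ∪ {negHole k 2 j0}) := by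
  ext y
  rcases hole_cases y with rfl | ⟨i, rfl⟩ | ⟨j, rfl⟩
  · simp [hs]
  · simp [hp i, Finset.mem_insert, Finset.mem_union]
  · simp [hn j, Finset.mem_insert, Finset.mem_union, Finset.mem_singleton]

lemma set_eq_T (A : Finset (Hole k 2)) (hs : sHole k 2 ∈ A)
    (hp : ∀ i, posHole k 2 i ∉ A) (hn : ∀ j, negHole k 2 j ∈ A) :
    A = ({sHole k 2, negHole k 2 0, negHole k 2 1} : Finset (Hole k 2)) := by
  ext y
  rcases hole_cases y with rfl | ⟨i, rfl⟩ | ⟨j, rfl⟩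
  · simp [hs]
  · simp [hp i, Finset.mem_insert]
  · simp only [Finset.mem_insert, Finset.mem_singleton]
    constructor
    · intro _
      right
      fin_cases j
      · left; rfl
      · right; rfl
    · intro _; exact hn j

end seteq

section seteq2
variable {k : ℕ}

lemma fin2_resolve (j j0 j1 : Fin 2) (h : j ≠ j0) (h' : j0 ≠ j1) : j = j1 := by
  fin_cases j <;> fin_cases j0 <;> fin_cases j1 <;> simp_all

lemma set_eq_sPn' (j0 j1 : Fin 2) (hjj : j0 ≠ j1) (A : Finset (Hole k 2))
    (hs : sHole k 2 ∈ A) (hp : ∀ i, posHole k 2 i ∈ A)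
    (hn0 : negHole k 2 j0 ∈ A) (hn1 : negHole k 2 j1 ∉ A) :
    A = insert (sHole k 2) (Pset k 2 ∪ {negHole k 2 j0}) := by
  apply set_eq_sPn j0 A hs hp
  intro j
  constructor
  · intro h
    by_contra hne
    exact hn1 ((fin2_resolve j j0 j1 hne hjj) ▸ h)
  · rintro rfl
    exact hn0

end seteq2
set_option maxHeartbeats 2000000 in
lemma hopf_forward {k : ℕ} (hk : 1 ≤ k) (hk2 : k ≠ 2) (F : Multiset (Finset (Hole k 2)))
    (hne : ∀ A ∈ F, A.Nonempty) (hd : HopfData F) : F = Fstd k 2 ∨ F = Flan k := by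
  obtain ⟨h1, h2, h3, h4⟩ := hd
  obtain ⟨a, b, c, habc⟩ := Multiset.card_eq_three.mp (h1 (sHole k 2))
  set G := F.filter (fun A => ¬ sHole k 2 ∈ A) with hGdef
  have hFG : F = a ::ₘ b ::ₘ c ::ₘ G := by
    have h := Multiset.filter_add_not (fun A => sHole k 2 ∈ A) F
    rw [habc] at h
    rw [← h, show ({a, b, c} : Multiset (Finset (Hole k 2))) = a ::ₘ b ::ₘ c ::ₘ 0 from rfl,
      Multiset.cons_add, Multiset.cons_add, Multiset.cons_add, zero_add]
  have hmemf : ∀ A ∈ ({a, b, c} : Multiset (Finset (Hole k 2))), sHole k 2 ∈ A := by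
    intro A hA
    rw [← habc] at hA
    exact (Multiset.mem_filter.mp hA).2
  have ha : sHole k 2 ∈ a := hmemf a (by simp)
  have hb : sHole k 2 ∈ b := hmemf b (by simp)
  have hc : sHole k 2 ∈ c := hmemf c (by simp)
  have hGs : ∀ A ∈ G, sHole k 2 ∉ A := fun A hA => (Multiset.mem_filter.mp hA).2
  have hGne : ∀ A ∈ G, A.Nonempty := fun A hA => hne A (Multiset.mem_filter.mp hA).1
  have hjG0 : ∀ y, jmult G (sHole k 2) y = 0 := by
    intro y
    unfold jmult
    rw [Multiset.filter_eq_nil.mpr (fun A hA h => hGs A hA h.1)]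
    rfl
  have hm3 : ∀ x : Hole k 2,
      (if x ∈ a then 1 else 0) + (if x ∈ b then 1 else 0) + (if x ∈ c then 1 else 0)
        + mult G x = 3 := by
    intro x
    have h := h1 x
    rw [hFG] at h
    simp only [mult_cons] at h
    omega
  have hj : ∀ x y : Hole k 2, jmult F x y =
      (if x ∈ a ∧ y ∈ a then 1 else 0) + (if x ∈ b ∧ y ∈ b then 1 else 0) +
      (if x ∈ c ∧ y ∈ c then 1 else 0) + jmult G x y := by
    intro x y
    rw [hFG]
    simp only [jmult_cons]
    omega
  have h2of3 : ∀ x : Hole k 2, x ≠ sHole k 2 →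
      (if x ∈ a then 1 else 0) + (if x ∈ b then 1 else 0) + (if x ∈ c then 1 else 0) = 2 := by
    intro x hx
    have hjx : jmult F (sHole k 2) x = 2 := by
      rcases hole_cases x with rfl | ⟨i, rfl⟩ | ⟨j, rfl⟩
      · exact absurd rfl hx
      · exact h2 _ _ (by simp) (Finset.mem_insert_self _ _)
          (Finset.mem_insert_of_mem pos_mem_Pset)
      · exact h3 _ _ (by simp) (Finset.mem_insert_self _ _)
          (Finset.mem_insert_of_mem neg_mem_Nset)
    rw [hj, hjG0] at hjx
    simp only [ha, hb, hc, true_and] at hjx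
    omega
  have hmG1 : ∀ x : Hole k 2, x ≠ sHole k 2 → mult G x = 1 := by
    intro x hx
    have h := hm3 x
    have h' := h2of3 x hx
    omega
  have hblk : ∀ x : Hole k 2, x ≠ sHole k 2 →
      ∃ B, G.filter (fun A => x ∈ A) = {B} :=
    fun x hx => Multiset.card_eq_one.mp (hmG1 x hx)
  have hpair : ∀ x y : Hole k 2, x ≠ sHole k 2 → y ≠ sHole k 2 →
      jmult F x y = (if code a b c x = code a b c y then 2 else 1) + jmult G x y := by
    intro x y hx hy
    rw [hj, pair_code' (h2of3 x hx) (h2of3 y hy)]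
  have hcf : ∀ x : Hole k 2, x ≠ sHole k 2 →
      (code a b c x = 3 ∨ code a b c x = 5 ∨ code a b c x = 6) ∧
      (x ∈ a ↔ code a b c x ≠ 3) ∧ (x ∈ b ↔ code a b c x ≠ 5) ∧
      (x ∈ c ↔ code a b c x ≠ 6) :=
    fun x hx => code_facts' (h2of3 x hx)
  have hne01 : negHole k 2 0 ≠ negHole k 2 1 :=
    fun h => absurd (negHole_inj.mp h) (by decide)
  -- p-vs-n facts
  have hGpn : ∀ (i : Fin k) (j : Fin 2),
      code a b c (posHole k 2 i) ≠ code a b c (negHole k 2 j) ∧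
      jmult G (posHole k 2 i) (negHole k 2 j) = 0 := by
    intro i j
    have h := h4 (posHole k 2 i) (negHole k 2 j) pos_mem_Pset neg_mem_Nset
    rw [hpair _ _ (by simp) (by simp)] at h
    by_cases he : code a b c (posHole k 2 i) = code a b c (negHole k 2 j)
    · rw [if_pos he] at h; omega
    · rw [if_neg he] at h; exact ⟨he, by omega⟩
  have hjnn : jmult F (negHole k 2 0) (negHole k 2 1) = 2 :=
    h3 _ _ hne01 (Finset.mem_insert_of_mem neg_mem_Nset)
      (Finset.mem_insert_of_mem neg_mem_Nset)
  have hjpp : ∀ i i' : Fin k, i ≠ i' → jmult F (posHole k 2 i) (posHole k 2 i') = 2 := by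
    intro i i' hii
    exact h2 _ _ (fun h => hii (posHole_inj.mp h)) (Finset.mem_insert_of_mem pos_mem_Pset)
      (Finset.mem_insert_of_mem pos_mem_Pset)
  -- jmult G between distinct p's, determined by codes
  have hGpp : ∀ i i' : Fin k, i ≠ i' →
      jmult G (posHole k 2 i) (posHole k 2 i') =
        (if code a b c (posHole k 2 i) = code a b c (posHole k 2 i') then 0 else 1) := by
    intro i i' hii
    have h := hjpp i i' hii
    rw [hpair _ _ (by simp) (by simp)] at h
    by_cases he : code a b c (posHole k 2 i) = code a b c (posHole k 2 i')
    · rw [if_pos he] at h; rw [if_pos he]; omega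
    · rw [if_neg he] at h; rw [if_neg he]; omega
  by_cases hvv : code a b c (negHole k 2 0) = code a b c (negHole k 2 1)
  · -- standard case
    left
    have hn01 : jmult G (negHole k 2 0) (negHole k 2 1) = 0 := by
      have h := hjnn
      rw [hpair _ _ (by simp) (by simp), if_pos hvv] at h
      omega
    have hpcode : ∀ i i' : Fin k,
        code a b c (posHole k 2 i) = code a b c (posHole k 2 i') := by
      by_contra hcon
      push_neg at hcon
      obtain ⟨i, i', hcd⟩ := hcon
      have hii : i ≠ i' := fun h => hcd (by rw [h])
      have hvi : i.val ≠ i'.val := fun h => hii (Fin.ext h)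
      have hk3 : 3 ≤ k := by
        have h1 := i.2
        have h2 := i'.2
        omega
      have hex : ∃ i'' : Fin k, i'' ≠ i ∧ i'' ≠ i' := by
        by_contra hno
        push_neg at hno
        have hsub : (Finset.univ : Finset (Fin k)) ⊆ {i, i'} := by
          intro x _
          by_cases hxi : x = i
          · simp [hxi]
          · simp [hno x hxi]
        have hcard := Finset.card_le_card hsub
        have h2 : ({i, i'} : Finset (Fin k)).card ≤ 2 := by
          apply le_trans (Finset.card_insert_le _ _)
          simp
        rw [Finset.card_univ, Fintype.card_fin] at hcard
        omega
      obtain ⟨i'', hi''1, hi''2⟩ := hex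
      have key : ∀ i1 i2 i3 : Fin k, i1 ≠ i2 → i1 ≠ i3 → i2 ≠ i3 →
          code a b c (posHole k 2 i1) = code a b c (posHole k 2 i2) →
          code a b c (posHole k 2 i1) ≠ code a b c (posHole k 2 i3) → False := by
        intro i1 i2 i3 h12 h13 h23 hcd12 hcd13
        obtain ⟨B, hB⟩ := hblk (posHole k 2 i3) (by simp)
        have hj1 : jmult G (posHole k 2 i3) (posHole k 2 i1) = 1 := by
          rw [jmult_symm, hGpp i1 i3 h13, if_neg hcd13]
        have hj2 : jmult G (posHole k 2 i3) (posHole k 2 i2) = 1 := by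
          rw [jmult_symm, hGpp i2 i3 h23,
            if_neg (fun h => hcd13 (hcd12.trans h))]
        have hmem1 : posHole k 2 i1 ∈ B := by
          by_contra hm
          rw [jmult_of_single hB, if_neg hm] at hj1
          exact absurd hj1 (by omega)
        have hmem2 : posHole k 2 i2 ∈ B := by
          by_contra hm
          rw [jmult_of_single hB, if_neg hm] at hj2
          exact absurd hj2 (by omega)
        have h0 : jmult G (posHole k 2 i1) (posHole k 2 i2) = 0 := by
          rw [hGpp i1 i2 h12, if_pos hcd12]
        exact jmult_ne_zero (block_mem hB).2 hmem1 hmem2 h0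
      have hm_i := (hcf (posHole k 2 i) (by simp)).1
      have hm_i' := (hcf (posHole k 2 i') (by simp)).1
      have hm_i'' := (hcf (posHole k 2 i'') (by simp)).1
      have hm_n := (hcf (negHole k 2 0) (by simp)).1
      have hni := (hGpn i 0).1
      have hni' := (hGpn i' 0).1
      have hni'' := (hGpn i'' 0).1
      have hor : code a b c (posHole k 2 i'') = code a b c (posHole k 2 i) ∨
          code a b c (posHole k 2 i'') = code a b c (posHole k 2 i') := by
        omega
      rcases hor with h | h
      · exact key i'' i i' hi''1 hi''2 hii h (by omega)
      · exact key i'' i' i hi''2 hi''1 (Ne.symm hii) h (by omega)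
    have hGppz : ∀ i i' : Fin k, i ≠ i' →
        jmult G (posHole k 2 i) (posHole k 2 i') = 0 := by
      intro i i' hii
      rw [hGpp i i' hii, if_pos (hpcode i i')]
    have hjGnn : ∀ j j' : Fin 2, j ≠ j' →
        jmult G (negHole k 2 j) (negHole k 2 j') = 0 := by
      intro j j' hjj
      fin_cases j <;> fin_cases j'
      · exact absurd rfl hjj
      · exact hn01
      · rw [jmult_symm]; exact hn01
      · exact absurd rfl hjj
    have hBn : ∀ j : Fin 2, G.filter (fun A => negHole k 2 j ∈ A) =
        {({negHole k 2 j} : Finset (Hole k 2))} := by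
      intro j
      obtain ⟨B, hB⟩ := hblk (negHole k 2 j) (by simp)
      have hBeq : B = {negHole k 2 j} := by
        ext y
        rw [Finset.mem_singleton]
        constructor
        · intro hy
          rcases hole_cases y with rfl | ⟨i, rfl⟩ | ⟨j', rfl⟩
          · exact absurd hy (hGs B (block_mem hB).2)
          · exfalso
            have hz : jmult G (negHole k 2 j) (posHole k 2 i) = 0 := by
              rw [jmult_symm]; exact (hGpn i j).2
            rw [jmult_of_single hB, if_pos hy] at hz
            exact absurd hz (by omega)
          · by_cases hjj : j = j'
            · rw [hjj]
            · exfalso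
              have hz := hjGnn j j' hjj
              rw [jmult_of_single hB, if_pos hy] at hz
              exact absurd hz (by omega)
        · rintro rfl
          exact (block_mem hB).1
      rw [hBeq] at hB
      exact hB
    have hBp : ∀ i : Fin k, G.filter (fun A => posHole k 2 i ∈ A) =
        {({posHole k 2 i} : Finset (Hole k 2))} := by
      intro i
      obtain ⟨B, hB⟩ := hblk (posHole k 2 i) (by simp)
      have hBeq : B = {posHole k 2 i} := by
        ext y
        rw [Finset.mem_singleton]
        constructor
        · intro hy
          rcases hole_cases y with rfl | ⟨i', rfl⟩ | ⟨j, rfl⟩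
          · exact absurd hy (hGs B (block_mem hB).2)
          · by_cases hii : i = i'
            · rw [hii]
            · exfalso
              have hz := hGppz i i' hii
              rw [jmult_of_single hB, if_pos hy] at hz
              exact absurd hz (by omega)
          · exfalso
            have hz := (hGpn i j).2
            rw [jmult_of_single hB, if_pos hy] at hz
            exact absurd hz (by omega)
        · rintro rfl
          exact (block_mem hB).1
      rw [hBeq] at hB
      exact hB
    have hGeq : G = (Pset k 2 ∪ Nset k 2).val.map (fun x => {x}) := by
      apply G_recon_std G hGne hGs
      intro x hx
      rcases hole_cases x with rfl | ⟨i, rfl⟩ | ⟨j, rfl⟩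
      · exact absurd rfl hx
      · exact hBp i
      · exact hBn j
    -- determine a b c
    have hcnj : ∀ j : Fin 2, code a b c (negHole k 2 j) = code a b c (negHole k 2 0) := by
      intro j
      fin_cases j
      · rfl
      · exact hvv.symm
    set i0 : Fin k := ⟨0, hk⟩ with hi0
    have hwv : code a b c (posHole k 2 i0) ≠ code a b c (negHole k 2 0) := (hGpn i0 0).1
    have hma : ∀ x : Hole k 2, x ≠ sHole k 2 → (x ∈ a ↔ code a b c x ≠ 3) :=
      fun x hx => (hcf x hx).2.1
    have hmb : ∀ x : Hole k 2, x ≠ sHole k 2 → (x ∈ b ↔ code a b c x ≠ 5) :=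
      fun x hx => (hcf x hx).2.2.1
    have hmc : ∀ x : Hole k 2, x ≠ sHole k 2 → (x ∈ c ↔ code a b c x ≠ 6) :=
      fun x hx => (hcf x hx).2.2.2
    have hdet : ∀ (t : ℕ) (X : Finset (Hole k 2)), sHole k 2 ∈ X →
        (∀ x : Hole k 2, x ≠ sHole k 2 → (x ∈ X ↔ code a b c x ≠ t)) →
        ((code a b c (negHole k 2 0) ≠ t → code a b c (posHole k 2 i0) ≠ t →
            X = Finset.univ) ∧
         (code a b c (negHole k 2 0) = t → X = insert (sHole k 2) (Pset k 2)) ∧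
         (code a b c (posHole k 2 i0) = t → X = insert (sHole k 2) (Nset k 2))) := by
      intro t X hsX hiff
      refine ⟨?_, ?_, ?_⟩
      · intro hv hw
        exact set_eq_univ X hsX
          (fun i => (hiff _ (by simp)).mpr (by rw [hpcode i i0]; omega))
          (fun j => (hiff _ (by simp)).mpr (by rw [hcnj j]; omega))
      · intro hv
        exact set_eq_sP X hsX
          (fun i => (hiff _ (by simp)).mpr (by rw [hpcode i i0]; omega))
          (fun j hm => ((hiff _ (by simp)).mp hm) (by rw [hcnj j]; omega))
      · intro hw
        exact set_eq_sN X hsX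
          (fun i hm => ((hiff _ (by simp)).mp hm) (by rw [hpcode i i0]; omega))
          (fun j => (hiff _ (by simp)).mpr (by rw [hcnj j]; omega))
    have hdeta := hdet 3 a ha hma
    have hdetb := hdet 5 b hb hmb
    have hdetc := hdet 6 c hc hmc
    rcases (hcf (negHole k 2 0) (by simp)).1 with hv | hv | hv <;>
      rcases (hcf (posHole k 2 i0) (by simp)).1 with hw | hw | hw
    · omega
    · -- v=3, w=5 : a=sP, b=sN, c=univ
      rw [hFG, hGeq, hdeta.2.1 hv, hdetb.2.2 hw, hdetc.1 (by omega) (by omega), Fstd]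
      exact p312 _ _ _ _
    · -- v=3, w=6 : a=sP, b=univ, c=sN
      rw [hFG, hGeq, hdeta.2.1 hv, hdetb.1 (by omega) (by omega), hdetc.2.2 hw, Fstd]
      exact p213 _ _ _ _
    · -- v=5, w=3 : a=sN, b=sP, c=univ
      rw [hFG, hGeq, hdeta.2.2 hw, hdetb.2.1 hv, hdetc.1 (by omega) (by omega), Fstd]
      exact p321 _ _ _ _
    · omega
    · -- v=5, w=6 : a=univ, b=sP, c=sN
      rw [hFG, hGeq, hdeta.1 (by omega) (by omega), hdetb.2.1 hv, hdetc.2.2 hw, Fstd]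
    · -- v=6, w=3 : a=sN, b=univ, c=sP
      rw [hFG, hGeq, hdeta.2.2 hw, hdetb.1 (by omega) (by omega), hdetc.2.1 hv, Fstd]
      exact p231 _ _ _ _
    · -- v=6, w=5 : a=univ, b=sN, c=sP
      rw [hFG, hGeq, hdeta.1 (by omega) (by omega), hdetb.2.2 hw, hdetc.2.1 hv, Fstd]
      exact p132 _ _ _ _
    · omega

  · -- lantern case
    right
    have hn01 : jmult G (negHole k 2 0) (negHole k 2 1) = 1 := by
      have h := hjnn
      rw [hpair _ _ (by simp) (by simp), if_neg hvv] at h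
      omega
    have hn10 : jmult G (negHole k 2 1) (negHole k 2 0) = 1 := by
      rw [jmult_symm]; exact hn01
    have hpcode : ∀ i i' : Fin k,
        code a b c (posHole k 2 i) = code a b c (posHole k 2 i') := by
      intro i i'
      have hm_i := (hcf (posHole k 2 i) (by simp)).1
      have hm_i' := (hcf (posHole k 2 i') (by simp)).1
      have hm_n0 := (hcf (negHole k 2 0) (by simp)).1
      have hm_n1 := (hcf (negHole k 2 1) (by simp)).1
      have hx1 := (hGpn i 0).1
      have hx2 := (hGpn i 1).1
      have hx3 := (hGpn i' 0).1
      have hx4 := (hGpn i' 1).1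
      omega
    have hGppz : ∀ i i' : Fin k, i ≠ i' →
        jmult G (posHole k 2 i) (posHole k 2 i') = 0 := by
      intro i i' hii
      rw [hGpp i i' hii, if_pos (hpcode i i')]
    have hBn : ∀ j : Fin 2, G.filter (fun A => negHole k 2 j ∈ A) =
        {({negHole k 2 0, negHole k 2 1} : Finset (Hole k 2))} := by
      intro j
      obtain ⟨B, hB⟩ := hblk (negHole k 2 j) (by simp)
      have hBeq : B = {negHole k 2 0, negHole k 2 1} := by
        ext y
        simp only [Finset.mem_insert, Finset.mem_singleton]
        constructor
        · intro hy
          rcases hole_cases y with rfl | ⟨i, rfl⟩ | ⟨j', rfl⟩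
          · exact absurd hy (hGs B (block_mem hB).2)
          · exfalso
            have hz : jmult G (negHole k 2 j) (posHole k 2 i) = 0 := by
              rw [jmult_symm]; exact (hGpn i j).2
            rw [jmult_of_single hB, if_pos hy] at hz
            exact absurd hz (by omega)
          · fin_cases j' <;> simp
        · intro hy
          have hmem : ∀ j' : Fin 2, negHole k 2 j' ∈ B := by
            intro j'
            by_cases hjj : j = j'
            · exact hjj ▸ (block_mem hB).1
            · by_contra hm
              have hz : jmult G (negHole k 2 j) (negHole k 2 j') = 1 := by
                fin_cases j <;> fin_cases j' <;>
                  first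
                    | exact absurd rfl hjj
                    | exact hn01
                    | exact hn10
              rw [jmult_of_single hB, if_neg hm] at hz
              exact absurd hz (by omega)
          rcases hy with rfl | rfl
          · exact hmem 0
          · exact hmem 1
      rw [hBeq] at hB
      exact hB
    have hBp : ∀ i : Fin k, G.filter (fun A => posHole k 2 i ∈ A) =
        {({posHole k 2 i} : Finset (Hole k 2))} := by
      intro i
      obtain ⟨B, hB⟩ := hblk (posHole k 2 i) (by simp)
      have hBeq : B = {posHole k 2 i} := by
        ext y
        rw [Finset.mem_singleton]
        constructor
        · intro hy
          rcases hole_cases y with rfl | ⟨i', rfl⟩ | ⟨j, rfl⟩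
          · exact absurd hy (hGs B (block_mem hB).2)
          · by_cases hii : i = i'
            · rw [hii]
            · exfalso
              have hz := hGppz i i' hii
              rw [jmult_of_single hB, if_pos hy] at hz
              exact absurd hz (by omega)
          · exfalso
            have hz := (hGpn i j).2
            rw [jmult_of_single hB, if_pos hy] at hz
            exact absurd hz (by omega)
        · rintro rfl
          exact (block_mem hB).1
      rw [hBeq] at hB
      exact hB
    have hGeq : G = ({negHole k 2 0, negHole k 2 1} : Finset (Hole k 2)) ::ₘ
        (Pset k 2).val.map (fun x => {x}) :=
      G_recon_lan G hGne hGs hBn hBp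
    set i0 : Fin k := ⟨0, hk⟩ with hi0
    have hm_w := (hcf (posHole k 2 i0) (by simp)).1
    have hm_n0 := (hcf (negHole k 2 0) (by simp)).1
    have hm_n1 := (hcf (negHole k 2 1) (by simp)).1
    have hwn0 := (hGpn i0 0).1
    have hwn1 := (hGpn i0 1).1
    have hma : ∀ x : Hole k 2, x ≠ sHole k 2 → (x ∈ a ↔ code a b c x ≠ 3) :=
      fun x hx => (hcf x hx).2.1
    have hmb : ∀ x : Hole k 2, x ≠ sHole k 2 → (x ∈ b ↔ code a b c x ≠ 5) :=
      fun x hx => (hcf x hx).2.2.1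
    have hmc : ∀ x : Hole k 2, x ≠ sHole k 2 → (x ∈ c ↔ code a b c x ≠ 6) :=
      fun x hx => (hcf x hx).2.2.2
    have hdet : ∀ (t : ℕ), (t = 3 ∨ t = 5 ∨ t = 6) → ∀ (X : Finset (Hole k 2)), sHole k 2 ∈ X →
        (∀ x : Hole k 2, x ≠ sHole k 2 → (x ∈ X ↔ code a b c x ≠ t)) →
        ((code a b c (negHole k 2 0) ≠ t → code a b c (negHole k 2 1) ≠ t →
            X = ({sHole k 2, negHole k 2 0, negHole k 2 1} : Finset (Hole k 2))) ∧
         (code a b c (negHole k 2 0) = t →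
            X = insert (sHole k 2) (Pset k 2 ∪ {negHole k 2 1})) ∧
         (code a b c (negHole k 2 1) = t →
            X = insert (sHole k 2) (Pset k 2 ∪ {negHole k 2 0}))) := by
      intro t ht X hsX hiff
      have hncases : ∀ j : Fin 2, negHole k 2 j = negHole k 2 0 ∨
          negHole k 2 j = negHole k 2 1 := by
        intro j
        fin_cases j
        · exact Or.inl rfl
        · exact Or.inr rfl
      refine ⟨?_, ?_, ?_⟩
      · intro hv0 hv1
        refine set_eq_T X hsX
          (fun i hm => ((hiff _ (by simp)).mp hm) (by rw [hpcode i i0]; omega))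
          (fun j => ?_)
        rcases hncases j with h | h <;> rw [h]
        · exact (hiff _ (by simp)).mpr (by omega)
        · exact (hiff _ (by simp)).mpr (by omega)
      · intro hv0
        refine set_eq_sPn' 1 0 (by decide) X hsX
          (fun i => (hiff _ (by simp)).mpr (by rw [hpcode i i0]; omega))
          ((hiff _ (by simp)).mpr (by omega))
          (fun hm => ((hiff _ (by simp)).mp hm) (by omega))
      · intro hv1
        refine set_eq_sPn' 0 1 (by decide) X hsX
          (fun i => (hiff _ (by simp)).mpr (by rw [hpcode i i0]; omega))
          ((hiff _ (by simp)).mpr (by omega))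
          (fun hm => ((hiff _ (by simp)).mp hm) (by omega))
    have hdeta := hdet 3 (by omega) a ha hma
    have hdetb := hdet 5 (by omega) b hb hmb
    have hdetc := hdet 6 (by omega) c hc hmc
    have hswap : (({negHole k 2 0, negHole k 2 1} : Finset (Hole k 2)) ::ₘ
        ({sHole k 2, negHole k 2 0, negHole k 2 1} : Finset (Hole k 2)) ::ₘ
        (Pset k 2).val.map (fun x => {x})) =
        (({sHole k 2, negHole k 2 0, negHole k 2 1} : Finset (Hole k 2)) ::ₘ
        ({negHole k 2 0, negHole k 2 1} : Finset (Hole k 2)) ::ₘ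
        (Pset k 2).val.map (fun x => {x})) := Multiset.cons_swap _ _ _
    rcases (hcf (negHole k 2 0) (by simp)).1 with hv0 | hv0 | hv0 <;>
      rcases (hcf (negHole k 2 1) (by simp)).1 with hv1 | hv1 | hv1
    · omega
    · -- (3,5) : a=S1, b=S0, c=T
      rw [hFG, hGeq, hdeta.2.1 hv0, hdetb.2.2 hv1, hdetc.1 (by omega) (by omega),
        Flan, hswap]
      exact p213 _ _ _ _
    · -- (3,6) : a=S1, b=T, c=S0
      rw [hFG, hGeq, hdeta.2.1 hv0, hdetb.1 (by omega) (by omega), hdetc.2.2 hv1,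
        Flan, hswap]
      exact p312 _ _ _ _
    · -- (5,3) : a=S0, b=S1, c=T
      rw [hFG, hGeq, hdeta.2.2 hv1, hdetb.2.1 hv0, hdetc.1 (by omega) (by omega),
        Flan, hswap]
    · omega
    · -- (5,6) : a=T, b=S1, c=S0
      rw [hFG, hGeq, hdeta.1 (by omega) (by omega), hdetb.2.1 hv0, hdetc.2.2 hv1,
        Flan, hswap]
      exact p321 _ _ _ _
    · -- (6,3) : a=S0, b=T, c=S1
      rw [hFG, hGeq, hdeta.2.2 hv1, hdetb.1 (by omega) (by omega), hdetc.2.1 hv0,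
        Flan, hswap]
      exact p132 _ _ _ _
    · -- (6,5) : a=T, b=S0, c=S1
      rw [hFG, hGeq, hdeta.1 (by omega) (by omega), hdetb.2.2 hv1, hdetc.2.1 hv0,
        Flan, hswap]
      exact p231 _ _ _ _
    · omega


/-- For `l = 2`, `k ≥ 1`, `k ≠ 2`: a multiset `F` of nonempty subsets of `H`
satisfies the Hopf multiplicity data if and only if `F = F_std` or `F = F_lan`; in particular
there are exactly two such configurations. -/
theorem hopf_config_two_classes (k : ℕ) (hk : 1 ≤ k) (hk2 : k ≠ 2) :
    (∀ F : Multiset (Finset (Hole k 2)),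
      ((∀ A ∈ F, A.Nonempty) ∧ HopfData F) ↔ (F = Fstd k 2 ∨ F = Flan k)) ∧
    Fstd k 2 ≠ Flan k := by
  refine ⟨fun F => ⟨fun h => hopf_forward hk hk2 F h.1 h.2, ?_⟩, fstd_ne_flan⟩
  rintro (rfl | rfl)
  · exact ⟨fstd_nonempty, hopf_std⟩
  · exact ⟨flan_nonempty, hopf_lan⟩
end

section
/- Assume k ≥ 3 and l ≥ 1. If F is a multiset of nonempty subsets of H satisfying the Hopf multiplicity data, then some member A of F contains all of the positive holes together with s, i.e. {s} ∪ P ⊆ A. -/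
lemma hopf_key {X : Type*} [DecidableEq X] (S : Multiset (Finset X)) (p n : X)
    (hS : Multiset.card S = 3)
    (hp : Multiset.card (S.filter (fun A => p ∈ A)) = 2)
    (hn : Multiset.card (S.filter (fun A => n ∈ A)) = 2)
    (hpn : Multiset.card (S.filter (fun A => p ∈ A ∧ n ∈ A)) ≤ 1)
    (A : Finset X) (hA : A ∈ S) (hpA : p ∉ A) (hnA : n ∉ A) : False := by
  obtain ⟨S', rfl⟩ := Multiset.exists_cons_of_mem hA
  rw [Multiset.filter_cons_of_neg (p := fun B => p ∈ B) S' hpA] at hp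
  rw [Multiset.filter_cons_of_neg (p := fun B => n ∈ B) S' hnA] at hn
  rw [Multiset.filter_cons_of_neg (p := fun B => p ∈ B ∧ n ∈ B) S' (by simp [hpA])] at hpn
  rw [Multiset.card_cons] at hS
  have hS' : Multiset.card S' = 2 := by omega
  have h1 : S'.filter (fun A => p ∈ A) = S' :=
    Multiset.eq_of_le_of_card_le (Multiset.filter_le _ _) (by rw [hp, hS'])
  have h2 : S'.filter (fun A => n ∈ A) = S' :=
    Multiset.eq_of_le_of_card_le (Multiset.filter_le _ _) (by rw [hn, hS'])
  have h3 : S'.filter (fun A => p ∈ A ∧ n ∈ A) = S' := by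
    rw [Multiset.filter_eq_self]
    intro B hB
    have hBp := hB; rw [← h1] at hBp
    have hBn := hB; rw [← h2] at hBn
    exact ⟨(Multiset.mem_filter.mp hBp).2, (Multiset.mem_filter.mp hBn).2⟩
  rw [h3, hS'] at hpn
  omega

/-- If `k ≥ 3` and `l ≥ 1`, then any multiset `F` of nonempty subsets of `H`
satisfying the Hopf multiplicity data has a member containing `{s} ∪ P`. -/
theorem hopf_config_exists_positive_multiloop (k l : ℕ) (hk : 3 ≤ k) (hl : 1 ≤ l)
    (F : Multiset (Finset (Hole k l))) (hne : ∀ A ∈ F, A.Nonempty) (hF : HopfData F) :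
    ∃ A ∈ F, insert (sHole k l) (Pset k l) ⊆ A := by
  obtain ⟨h1, h2, h3, h4⟩ := hF
  set S := F.filter (fun A => sHole k l ∈ A) with hSdef
  have hScard : Multiset.card S = 3 := h1 (sHole k l)
  set nh := negHole k l ⟨0, hl⟩ with hnhdef
  have hnhN : nh ∈ Nset k l := Finset.mem_image_of_mem _ (Finset.mem_univ _)
  have hsne : ∀ i : Fin k, sHole k l ≠ posHole k l i := by
    intro i h; simp [sHole, posHole] at h
  have hsnn : sHole k l ≠ nh := by simp [sHole, negHole, nh]
  have hsp : ∀ i : Fin k,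
      Multiset.card (S.filter (fun A => posHole k l i ∈ A)) = 2 := by
    intro i
    have h := h2 (posHole k l i) (sHole k l) (hsne i).symm
      (Finset.mem_insert_of_mem (Finset.mem_image_of_mem _ (Finset.mem_univ i)))
      (Finset.mem_insert_self _ _)
    rw [hSdef, Multiset.filter_filter]
    exact h
  have hsn : Multiset.card (S.filter (fun A => nh ∈ A)) = 2 := by
    have h := h3 nh (sHole k l) hsnn.symm (Finset.mem_insert_of_mem hnhN)
      (Finset.mem_insert_self _ _)
    rw [hSdef, Multiset.filter_filter]
    exact h
  have hpn : ∀ i : Fin k,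
      Multiset.card (S.filter (fun A => posHole k l i ∈ A ∧ nh ∈ A)) ≤ 1 := by
    intro i
    have h := h4 (posHole k l i) nh (Finset.mem_image_of_mem _ (Finset.mem_univ i)) hnhN
    rw [hSdef, Multiset.filter_filter]
    exact le_trans
      (Multiset.card_le_card (Multiset.monotone_filter_right
        (q := fun A => posHole k l i ∈ A ∧ nh ∈ A) F (fun A hA => hA.1)))
      (le_of_eq h)
  have hexA : ∃ A ∈ S, nh ∉ A := by
    by_contra h
    push_neg at h
    rw [Multiset.filter_eq_self.mpr h, hScard] at hsn
    omega
  obtain ⟨A, hAS, hnA⟩ := hexA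
  refine ⟨A, (Multiset.mem_filter.mp hAS).1, ?_⟩
  intro x hx
  rcases Finset.mem_insert.mp hx with rfl | hxP
  · exact (Multiset.mem_filter.mp hAS).2
  · obtain ⟨i, _, rfl⟩ := Finset.mem_image.mp hxP
    by_contra hpA
    exact hopf_key S (posHole k l i) nh hScard (hsp i) hsn (hpn i) A hAS hpA hnA
end

section
/- Assume k ≥ 3 and l ≥ 3. If F is a multiset of nonempty subsets of H satisfying the Hopf multiplicity data, then the full set H itself is a member of F (this corresponds to a curve in the factorization parallel to the outer boundary component of the planar page). -/
noncomputable def cnt {α : Type*} (F : Multiset α) (p : α → Prop) : ℕ :=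
  @Multiset.countP α p (Classical.decPred p) F

lemma cnt_congr {α : Type*} {F : Multiset α} {p q : α → Prop} (h : ∀ a ∈ F, p a ↔ q a) :
    cnt F p = cnt F q := by
  unfold cnt
  induction F using Multiset.induction with
  | empty => simp
  | cons a s ih =>
    rw [Multiset.countP_cons, Multiset.countP_cons,
      ih (fun b hb => h b (Multiset.mem_cons_of_mem hb))]
    have hiff := h a (Multiset.mem_cons_self a s)
    by_cases hp : p a
    · rw [if_pos hp, if_pos (hiff.mp hp)]
    · rw [if_neg hp, if_neg (fun hq => hp (hiff.mpr hq))]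

lemma cnt_and_or {α : Type*} (F : Multiset α) (p q : α → Prop) :
    cnt F (fun a => p a ∧ q a) + cnt F (fun a => p a ∨ q a) = cnt F p + cnt F q := by
  unfold cnt
  induction F using Multiset.induction with
  | empty => simp
  | cons a s ih =>
    simp only [Multiset.countP_cons]
    by_cases hp : p a <;> by_cases hq : q a <;>
      simp [hp, hq] <;> omega

lemma cnt_split {α : Type*} (F : Multiset α) (p q : α → Prop) :
    cnt F (fun a => p a ∧ q a) + cnt F (fun a => p a ∧ ¬ q a) = cnt F p := by
  unfold cnt
  induction F using Multiset.induction with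
  | empty => simp
  | cons a s ih =>
    simp only [Multiset.countP_cons]
    by_cases hp : p a <;> by_cases hq : q a <;>
      simp [hp, hq] <;> omega

lemma cnt_mono {α : Type*} {F : Multiset α} {p q : α → Prop} (h : ∀ a ∈ F, p a → q a) :
    cnt F p ≤ cnt F q := by
  unfold cnt
  induction F using Multiset.induction with
  | empty => simp
  | cons a s ih =>
    simp only [Multiset.countP_cons]
    have hih := ih (fun b hb => h b (Multiset.mem_cons_of_mem hb))
    by_cases hp : p a
    · rw [if_pos hp, if_pos (h a (Multiset.mem_cons_self a s) hp)]; omega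
    · rw [if_neg hp]; omega

lemma cnt_pos {α : Type*} {F : Multiset α} {p : α → Prop} :
    0 < cnt F p ↔ ∃ a ∈ F, p a := by
  unfold cnt
  exact @Multiset.countP_pos α p (Classical.decPred p) F

lemma cnt_eq_card_filter {α : Type*} (F : Multiset α) (p : α → Prop) [DecidablePred p] :
    cnt F p = (F.filter p).card := by
  unfold cnt
  induction F using Multiset.induction with
  | empty => simp
  | cons a s ih =>
    rw [Multiset.countP_cons, Multiset.filter_cons]
    by_cases hp : p a
    · rw [if_pos hp, if_pos hp]; simp [ih]
    · rw [if_neg hp, if_neg hp]; simp [ih]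

lemma cnt_unique {α : Type*} {F : Multiset α} {p : α → Prop} (h : cnt F p ≤ 1)
    {a b : α} (ha : a ∈ F) (hpa : p a) (hb : b ∈ F) (hpb : p b) : a = b := by
  classical
  rw [cnt_eq_card_filter] at h
  have ha' : a ∈ F.filter p := Multiset.mem_filter.mpr ⟨ha, hpa⟩
  have hb' : b ∈ F.filter p := Multiset.mem_filter.mpr ⟨hb, hpb⟩
  have hcard : (F.filter p).card = 1 := le_antisymm h (Multiset.card_pos_iff_exists_mem.mpr ⟨a, ha'⟩)
  obtain ⟨c, hc⟩ := Multiset.card_eq_one.mp hcard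
  rw [hc, Multiset.mem_singleton] at ha' hb'
  rw [ha', hb']

lemma caseB2 {H : Type*} (F : Multiset (Finset H)) (s : H) (Q : Finset H → Prop)
    (p q r : H)
    (h3q : cnt F (fun A => q ∈ A) = 3)
    (hs2q : cnt F (fun A => q ∈ A ∧ s ∈ A) = 2)
    (hrp : cnt F (fun A => r ∈ A ∧ p ∈ A) = 2)
    (hrq : cnt F (fun A => r ∈ A ∧ q ∈ A) = 2)
    (hpq2 : cnt F (fun A => p ∈ A ∧ q ∈ A) = 2)
    (hQs : ∀ A ∈ F, Q A → s ∈ A)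
    (hrQ : cnt F (fun A => r ∈ A ∧ Q A) = 1)
    (hpq0 : cnt F (fun A => p ∈ A ∧ q ∈ A ∧ Q A) = 0)
    (hsnQ : cnt F (fun A => s ∈ A ∧ ¬ Q A) = 1)
    (hmem : ∀ A ∈ F, s ∈ A → ¬ Q A → p ∈ A ∧ q ∈ A ∧ r ∈ A)
    (B : Finset H) (hBF : B ∈ F) (hQB : Q B) (hrB : r ∈ B) (hpB : p ∈ B) : False := by
  -- step 1
  have hrp1 : cnt F (fun A => r ∈ A ∧ p ∈ A ∧ Q A) = 1 := by
    have hle : cnt F (fun A => r ∈ A ∧ p ∈ A ∧ Q A) ≤ cnt F (fun A => r ∈ A ∧ Q A) :=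
      cnt_mono (by tauto)
    have hpos : 0 < cnt F (fun A => r ∈ A ∧ p ∈ A ∧ Q A) :=
      cnt_pos.mpr ⟨B, hBF, hrB, hpB, hQB⟩
    omega
  -- step 2
  have key : ∀ x y : H, (∀ A ∈ F, s ∈ A → ¬ Q A → x ∈ A ∧ y ∈ A) →
      cnt F (fun A => x ∈ A ∧ y ∈ A ∧ s ∈ A)
        = cnt F (fun A => x ∈ A ∧ y ∈ A ∧ Q A) + 1 := by
    intro x y hxy
    have hsp := cnt_split F (fun A => x ∈ A ∧ y ∈ A ∧ s ∈ A) Q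
    have e1 : cnt F (fun A => (x ∈ A ∧ y ∈ A ∧ s ∈ A) ∧ Q A)
        = cnt F (fun A => x ∈ A ∧ y ∈ A ∧ Q A) :=
      cnt_congr (fun A hA => by
        constructor
        · tauto
        · rintro ⟨hx, hy, hQA⟩; exact ⟨⟨hx, hy, hQs A hA hQA⟩, hQA⟩)
    have e2 : cnt F (fun A => (x ∈ A ∧ y ∈ A ∧ s ∈ A) ∧ ¬ Q A)
        = cnt F (fun A => s ∈ A ∧ ¬ Q A) :=
      cnt_congr (fun A hA => by
        constructor
        · tauto
        · rintro ⟨hs, hnQ⟩; exact ⟨⟨(hxy A hA hs hnQ).1, (hxy A hA hs hnQ).2, hs⟩, hnQ⟩)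
    rw [e1, e2, hsnQ] at hsp
    omega
  have hrps : cnt F (fun A => r ∈ A ∧ p ∈ A ∧ s ∈ A) = 2 := by
    rw [key r p (fun A hA hs hnQ => ⟨(hmem A hA hs hnQ).2.2, (hmem A hA hs hnQ).1⟩), hrp1]
  have hrpns : cnt F (fun A => r ∈ A ∧ p ∈ A ∧ ¬ (s ∈ A)) = 0 := by
    have hsp := cnt_split F (fun A => r ∈ A ∧ p ∈ A) (fun A => s ∈ A)
    have e1 : cnt F (fun A => (r ∈ A ∧ p ∈ A) ∧ s ∈ A)
        = cnt F (fun A => r ∈ A ∧ p ∈ A ∧ s ∈ A) := cnt_congr (fun A _ => by tauto)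
    have e2 : cnt F (fun A => (r ∈ A ∧ p ∈ A) ∧ ¬ (s ∈ A))
        = cnt F (fun A => r ∈ A ∧ p ∈ A ∧ ¬ (s ∈ A)) := cnt_congr (fun A _ => by tauto)
    rw [e1, e2, hrps, hrp] at hsp
    omega
  -- step 4
  have hqB : q ∉ B := by
    intro hqB
    have : 0 < cnt F (fun A => p ∈ A ∧ q ∈ A ∧ Q A) := cnt_pos.mpr ⟨B, hBF, hpB, hqB, hQB⟩
    omega
  -- step 5
  have hrq0 : cnt F (fun A => r ∈ A ∧ q ∈ A ∧ Q A) = 0 := by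
    by_contra h
    obtain ⟨B', hB'F, hrB', hqB', hQB'⟩ := cnt_pos.mp (Nat.pos_of_ne_zero h)
    have : B' = B := cnt_unique (p := fun A => r ∈ A ∧ Q A) (by omega)
      hB'F ⟨hrB', hQB'⟩ hBF ⟨hrB, hQB⟩
    exact hqB (this ▸ hqB')
  -- step 6-7
  have hrqs : cnt F (fun A => r ∈ A ∧ q ∈ A ∧ s ∈ A) = 1 := by
    rw [key r q (fun A hA hs hnQ => ⟨(hmem A hA hs hnQ).2.2, (hmem A hA hs hnQ).2.1⟩), hrq0]
  have hrqns : cnt F (fun A => r ∈ A ∧ q ∈ A ∧ ¬ (s ∈ A)) = 1 := by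
    have hsp := cnt_split F (fun A => r ∈ A ∧ q ∈ A) (fun A => s ∈ A)
    have e1 : cnt F (fun A => (r ∈ A ∧ q ∈ A) ∧ s ∈ A)
        = cnt F (fun A => r ∈ A ∧ q ∈ A ∧ s ∈ A) := cnt_congr (fun A _ => by tauto)
    have e2 : cnt F (fun A => (r ∈ A ∧ q ∈ A) ∧ ¬ (s ∈ A))
        = cnt F (fun A => r ∈ A ∧ q ∈ A ∧ ¬ (s ∈ A)) := cnt_congr (fun A _ => by tauto)
    rw [e1, e2, hrqs, hrq] at hsp
    omega
  obtain ⟨C', hC'F, hrC', hqC', hsC'⟩ := cnt_pos.mp (by omega : 0 < cnt F (fun A => r ∈ A ∧ q ∈ A ∧ ¬ (s ∈ A)))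
  -- step 8
  have hpqs : cnt F (fun A => p ∈ A ∧ q ∈ A ∧ s ∈ A) = 1 := by
    rw [key p q (fun A hA hs hnQ => ⟨(hmem A hA hs hnQ).1, (hmem A hA hs hnQ).2.1⟩), hpq0]
  have hpqns : cnt F (fun A => p ∈ A ∧ q ∈ A ∧ ¬ (s ∈ A)) = 1 := by
    have hsp := cnt_split F (fun A => p ∈ A ∧ q ∈ A) (fun A => s ∈ A)
    have e1 : cnt F (fun A => (p ∈ A ∧ q ∈ A) ∧ s ∈ A)
        = cnt F (fun A => p ∈ A ∧ q ∈ A ∧ s ∈ A) := cnt_congr (fun A _ => by tauto)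
    have e2 : cnt F (fun A => (p ∈ A ∧ q ∈ A) ∧ ¬ (s ∈ A))
        = cnt F (fun A => p ∈ A ∧ q ∈ A ∧ ¬ (s ∈ A)) := cnt_congr (fun A _ => by tauto)
    rw [e1, e2, hpqs, hpq2] at hsp
    omega
  obtain ⟨C, hCF, hpC, hqC, hsC⟩ := cnt_pos.mp (by omega : 0 < cnt F (fun A => p ∈ A ∧ q ∈ A ∧ ¬ (s ∈ A)))
  -- step 9
  have hqns : cnt F (fun A => q ∈ A ∧ ¬ (s ∈ A)) = 1 := by
    have hsp := cnt_split F (fun A => q ∈ A) (fun A => s ∈ A)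
    rw [hs2q, h3q] at hsp
    omega
  -- step 10
  have hCC : C = C' := cnt_unique (p := fun A => q ∈ A ∧ ¬ (s ∈ A)) (by omega)
    hCF ⟨hqC, hsC⟩ hC'F ⟨hqC', hsC'⟩
  -- step 11
  have : 0 < cnt F (fun A => r ∈ A ∧ p ∈ A ∧ ¬ (s ∈ A)) :=
    cnt_pos.mpr ⟨C, hCF, hCC ▸ hrC', hpC, hsC⟩
  omega

lemma caseB {H : Type*} (F : Multiset (Finset H)) (s : H) (isP : H → Prop)
    (Q : Finset H → Prop)
    (p q r : H) (hp : isP p) (hq : isP q) (hr : isP r)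
    (hpq : p ≠ q) (hpr : p ≠ r) (hqr : q ≠ r)
    (h3 : ∀ x, isP x → cnt F (fun A => x ∈ A) = 3)
    (hs2 : ∀ x, isP x → cnt F (fun A => x ∈ A ∧ s ∈ A) = 2)
    (h22 : ∀ x y, isP x → isP y → x ≠ y → cnt F (fun A => x ∈ A ∧ y ∈ A) = 2)
    (hQs : ∀ A ∈ F, Q A → s ∈ A)
    (hQ2 : cnt F Q = 2)
    (hQ1 : ∀ x, isP x → cnt F (fun A => x ∈ A ∧ Q A) = 1)
    (hsnQ : cnt F (fun A => s ∈ A ∧ ¬ Q A) = 1)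
    (hmem : ∀ A ∈ F, s ∈ A → ¬ Q A → ∀ x, isP x → x ∈ A)
    (hPQ0 : cnt F (fun A => (∀ x, isP x → x ∈ A) ∧ Q A) = 0) : False := by
  by_cases hall : ∀ x y, isP x → isP y → x ≠ y → 0 < cnt F (fun A => x ∈ A ∧ y ∈ A ∧ Q A)
  · -- subcase A : all of P lies in one Q-member
    obtain ⟨B, hBF, hpB, hQB⟩ := cnt_pos.mp
      (by rw [hQ1 p hp]; omega : 0 < cnt F (fun A => p ∈ A ∧ Q A))
    have hBall : ∀ x, isP x → x ∈ B := by
      intro x hx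
      by_cases hxp : x = p
      · exact hxp ▸ hpB
      obtain ⟨B', hB'F, hpB', hxB', hQB'⟩ :=
        cnt_pos.mp (hall p x hp hx (fun h => hxp h.symm))
      have : B' = B := cnt_unique (p := fun A => p ∈ A ∧ Q A)
        (by rw [hQ1 p hp]) hB'F ⟨hpB', hQB'⟩ hBF ⟨hpB, hQB⟩
      exact this ▸ hxB'
    have : 0 < cnt F (fun A => (∀ x, isP x → x ∈ A) ∧ Q A) :=
      cnt_pos.mpr ⟨B, hBF, hBall, hQB⟩
    omega
  · push_neg at hall
    obtain ⟨x, y, hx, hy, hxy, hzero'⟩ := hall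
    have hzero : cnt F (fun A => x ∈ A ∧ y ∈ A ∧ Q A) = 0 := by omega
    -- find a third element z of P distinct from x, y
    obtain ⟨z, hz, hzx, hzy⟩ : ∃ z, isP z ∧ z ≠ x ∧ z ≠ y := by
      by_cases h1 : p ≠ x ∧ p ≠ y
      · exact ⟨p, hp, h1.1, h1.2⟩
      by_cases h2 : q ≠ x ∧ q ≠ y
      · exact ⟨q, hq, h2.1, h2.2⟩
      refine ⟨r, hr, ?_, ?_⟩ <;>
      · push_neg at h1 h2
        intro hrxy
        rcases Classical.em (p = x) with hpx | hpx
        · rcases Classical.em (q = x) with hqx | hqx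
          · exact hpq (hpx.trans hqx.symm)
          · have hqy := h2 hqx
            first
              | exact hpr (hpx.trans hrxy.symm)
              | exact hqr (hqy.trans hrxy.symm)
        · have hpy := h1 hpx
          rcases Classical.em (q = x) with hqx | hqx
          · first
              | exact hqr (hqx.trans hrxy.symm)
              | exact hpr (hpy.trans hrxy.symm)
          · exact hpq (hpy.trans (h2 hqx).symm)
    -- every Q-member contains x or y
    have hor : cnt F (fun A => (x ∈ A ∨ y ∈ A) ∧ Q A) = 2 := by
      have hao := cnt_and_or F (fun A => x ∈ A ∧ Q A) (fun A => y ∈ A ∧ Q A)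
      have e1 : cnt F (fun A => (x ∈ A ∧ Q A) ∧ (y ∈ A ∧ Q A))
          = cnt F (fun A => x ∈ A ∧ y ∈ A ∧ Q A) := cnt_congr (fun A _ => by tauto)
      have e2 : cnt F (fun A => (x ∈ A ∧ Q A) ∨ (y ∈ A ∧ Q A))
          = cnt F (fun A => (x ∈ A ∨ y ∈ A) ∧ Q A) := cnt_congr (fun A _ => by tauto)
      rw [e1, e2, hzero, hQ1 x hx, hQ1 y hy] at hao
      omega
    have hQxy : ∀ A ∈ F, Q A → x ∈ A ∨ y ∈ A := by
      intro A hA hQA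
      by_contra hcon
      have hsp := cnt_split F Q (fun A => x ∈ A ∨ y ∈ A)
      have e1 : cnt F (fun A => Q A ∧ (x ∈ A ∨ y ∈ A))
          = cnt F (fun A => (x ∈ A ∨ y ∈ A) ∧ Q A) := cnt_congr (fun A _ => by tauto)
      rw [e1, hor, hQ2] at hsp
      have : 0 < cnt F (fun A => Q A ∧ ¬ (x ∈ A ∨ y ∈ A)) :=
        cnt_pos.mpr ⟨A, hA, hQA, hcon⟩
      omega
    -- the Q-member containing z
    obtain ⟨B, hBF, hzB, hQB⟩ := cnt_pos.mp
      (by rw [hQ1 z hz]; omega : 0 < cnt F (fun A => z ∈ A ∧ Q A))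
    have hmem3 : ∀ A ∈ F, s ∈ A → ¬ Q A → x ∈ A ∧ y ∈ A ∧ z ∈ A :=
      fun A hA hs hnQ => ⟨hmem A hA hs hnQ x hx, hmem A hA hs hnQ y hy, hmem A hA hs hnQ z hz⟩
    rcases hQxy B hBF hQB with hxB | hyB
    · exact caseB2 F s Q x y z (h3 y hy) (hs2 y hy)
        (h22 z x hz hx hzx) (h22 z y hz hy hzy) (h22 x y hx hy hxy)
        hQs (hQ1 z hz) hzero hsnQ hmem3 B hBF hQB hzB hxB
    · have hzero2 : cnt F (fun A => y ∈ A ∧ x ∈ A ∧ Q A) = 0 := by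
        rw [cnt_congr (fun A _ => by tauto : ∀ A ∈ F, (y ∈ A ∧ x ∈ A ∧ Q A) ↔ (x ∈ A ∧ y ∈ A ∧ Q A)), hzero]
      have hmem3' : ∀ A ∈ F, s ∈ A → ¬ Q A → y ∈ A ∧ x ∈ A ∧ z ∈ A :=
        fun A hA hs hnQ => ⟨hmem A hA hs hnQ y hy, hmem A hA hs hnQ x hx, hmem A hA hs hnQ z hz⟩
      exact caseB2 F s Q y x z (h3 x hx) (hs2 x hx)
        (h22 z y hz hy hzy) (h22 z x hz hx hzx) (h22 y x hy hx (fun h => hxy h.symm))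
        hQs (hQ1 z hz) hzero2 hsnQ hmem3' B hBF hQB hzB hyB

lemma caseC {H : Type*} (F : Multiset (Finset H)) (s : H) (P N : Finset H)
    (p q r : H) (hp : p ∈ P) (hq : q ∈ P) (hr : r ∈ P)
    (hpq : p ≠ q) (hpr : p ≠ r) (hqr : q ≠ r)
    (f_s : cnt F (fun A => s ∈ A) = 3)
    (h3 : ∀ x ∈ P, cnt F (fun A => x ∈ A) = 3)
    (hs2 : ∀ x ∈ P, cnt F (fun A => x ∈ A ∧ s ∈ A) = 2)
    (h22 : ∀ x ∈ P, ∀ y ∈ P, x ≠ y → cnt F (fun A => x ∈ A ∧ y ∈ A) = 2)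
    (step2 : ∀ A ∈ F, s ∈ A → (∀ x ∈ P, x ∈ A) ∨ (∀ y ∈ N, y ∈ A))
    (hQ2 : cnt F (fun A => s ∈ A ∧ ∀ y ∈ N, y ∈ A) = 2)
    (hPQ0 : cnt F (fun A => s ∈ A ∧ (∀ x ∈ P, x ∈ A) ∧ (∀ y ∈ N, y ∈ A)) = 0) : False := by
  have hsnQ : cnt F (fun A => s ∈ A ∧ ¬ (s ∈ A ∧ ∀ y ∈ N, y ∈ A)) = 1 := by
    have hsp := cnt_split F (fun A => s ∈ A) (fun A => s ∈ A ∧ ∀ y ∈ N, y ∈ A)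
    have e1 : cnt F (fun A => s ∈ A ∧ (s ∈ A ∧ ∀ y ∈ N, y ∈ A))
        = cnt F (fun A => s ∈ A ∧ ∀ y ∈ N, y ∈ A) := cnt_congr (fun A _ => by tauto)
    rw [e1, hQ2, f_s] at hsp
    omega
  have hmem' : ∀ A ∈ F, s ∈ A → ¬ (s ∈ A ∧ ∀ y ∈ N, y ∈ A) → ∀ x, x ∈ P → x ∈ A := by
    intro A hA hsA hnQ x hx
    rcases step2 A hA hsA with h | h
    · exact h x hx
    · exact absurd ⟨hsA, h⟩ hnQ
  have hQ1 : ∀ x, x ∈ P → cnt F (fun A => x ∈ A ∧ (s ∈ A ∧ ∀ y ∈ N, y ∈ A)) = 1 := by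
    intro x hx
    have hsp := cnt_split F (fun A => x ∈ A ∧ s ∈ A) (fun A => ∀ y ∈ N, y ∈ A)
    rw [hs2 x hx] at hsp
    have e2 : cnt F (fun A => (x ∈ A ∧ s ∈ A) ∧ ¬ (∀ y ∈ N, y ∈ A))
        = cnt F (fun A => s ∈ A ∧ ¬ (s ∈ A ∧ ∀ y ∈ N, y ∈ A)) := by
      apply cnt_congr
      intro A hA
      constructor
      · rintro ⟨⟨_, hsA⟩, hn⟩
        exact ⟨hsA, fun hQA => hn hQA.2⟩
      · rintro ⟨hsA, hn⟩
        have hNn : ¬ (∀ y ∈ N, y ∈ A) := fun hNA => hn ⟨hsA, hNA⟩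
        exact ⟨⟨hmem' A hA hsA (fun hQA => hNn hQA.2) x hx, hsA⟩, hNn⟩
    rw [e2, hsnQ] at hsp
    have e1 : cnt F (fun A => x ∈ A ∧ (s ∈ A ∧ ∀ y ∈ N, y ∈ A))
        = cnt F (fun A => (x ∈ A ∧ s ∈ A) ∧ ∀ y ∈ N, y ∈ A) := cnt_congr (fun A _ => by tauto)
    rw [e1]
    omega
  have hPQ0' : cnt F (fun A => (∀ x, x ∈ P → x ∈ A) ∧ (s ∈ A ∧ ∀ y ∈ N, y ∈ A)) = 0 := by
    rw [cnt_congr (fun A _ => by tauto :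
      ∀ A ∈ F, ((∀ x, x ∈ P → x ∈ A) ∧ (s ∈ A ∧ ∀ y ∈ N, y ∈ A))
        ↔ (s ∈ A ∧ (∀ x ∈ P, x ∈ A) ∧ (∀ y ∈ N, y ∈ A)))]
    exact hPQ0
  exact caseB F s (fun x => x ∈ P) (fun A => s ∈ A ∧ ∀ y ∈ N, y ∈ A) p q r hp hq hr hpq hpr hqr
    (fun x hx => h3 x hx) (fun x hx => hs2 x hx) (fun x y hx hy hxy => h22 x hx y hy hxy)
    (fun A _ hQ => hQ.1) hQ2 hQ1 hsnQ hmem' hPQ0'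

/-- If `k ≥ 3` and `l ≥ 3`, then any multiset `F` of nonempty subsets of `H`
satisfying the Hopf multiplicity data contains the full set `H` as a member. -/
theorem hopf_config_univ_mem (k l : ℕ) (hk : 3 ≤ k) (hl : 3 ≤ l)
    (F : Multiset (Finset (Hole k l))) (hne : ∀ A ∈ F, A.Nonempty) (hF : HopfData F) :
    (Finset.univ : Finset (Hole k l)) ∈ F := by
  classical
  obtain ⟨h1, h2, h3, h4⟩ := hF
  have hmult : ∀ x : Hole k l, cnt F (fun A => x ∈ A) = 3 := fun x => by
    rw [cnt_eq_card_filter]; exact h1 x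
  have hjmult : ∀ x y : Hole k l, cnt F (fun A => x ∈ A ∧ y ∈ A) = jmult F x y := fun x y => by
    rw [cnt_eq_card_filter]; rfl
  have hpP : ∀ i : Fin k, posHole k l i ∈ Pset k l :=
    fun i => Finset.mem_image_of_mem _ (Finset.mem_univ i)
  have hnN : ∀ j : Fin l, negHole k l j ∈ Nset k l :=
    fun j => Finset.mem_image_of_mem _ (Finset.mem_univ j)
  have hPne : ∀ x ∈ Pset k l, x ≠ sHole k l := by
    intro x hx
    obtain ⟨i, _, rfl⟩ := Finset.mem_image.mp hx
    simp [posHole, sHole]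
  have hNne : ∀ y ∈ Nset k l, y ≠ sHole k l := by
    intro y hy
    obtain ⟨j, _, rfl⟩ := Finset.mem_image.mp hy
    simp [negHole, sHole]
  have f_s : cnt F (fun A => sHole k l ∈ A) = 3 := hmult _
  have f_ps : ∀ x ∈ Pset k l, cnt F (fun A => x ∈ A ∧ sHole k l ∈ A) = 2 := by
    intro x hx
    rw [hjmult]
    exact h2 x _ (hPne x hx) (Finset.mem_insert_of_mem hx) (Finset.mem_insert_self _ _)
  have f_ns : ∀ y ∈ Nset k l, cnt F (fun A => y ∈ A ∧ sHole k l ∈ A) = 2 := by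
    intro y hy
    rw [hjmult]
    exact h3 y _ (hNne y hy) (Finset.mem_insert_of_mem hy) (Finset.mem_insert_self _ _)
  have f_pp : ∀ x ∈ Pset k l, ∀ y ∈ Pset k l, x ≠ y →
      cnt F (fun A => x ∈ A ∧ y ∈ A) = 2 := by
    intro x hx y hy hxy
    rw [hjmult]
    exact h2 x y hxy (Finset.mem_insert_of_mem hx) (Finset.mem_insert_of_mem hy)
  have f_nn : ∀ x ∈ Nset k l, ∀ y ∈ Nset k l, x ≠ y →
      cnt F (fun A => x ∈ A ∧ y ∈ A) = 2 := by
    intro x hx y hy hxy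
    rw [hjmult]
    exact h3 x y hxy (Finset.mem_insert_of_mem hx) (Finset.mem_insert_of_mem hy)
  have f_pn : ∀ x ∈ Pset k l, ∀ y ∈ Nset k l, cnt F (fun A => x ∈ A ∧ y ∈ A) = 1 := by
    intro x hx y hy
    rw [hjmult]
    exact h4 x y hx hy
  -- Step 1: no s-member avoids both a positive and a negative hole
  have step1 : ∀ x ∈ Pset k l, ∀ y ∈ Nset k l,
      cnt F (fun A => sHole k l ∈ A ∧ ¬ (x ∈ A) ∧ ¬ (y ∈ A)) = 0 := by
    intro x hx y hy
    have hao := cnt_and_or F (fun A => x ∈ A ∧ sHole k l ∈ A) (fun A => y ∈ A ∧ sHole k l ∈ A)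
    rw [f_ps x hx, f_ns y hy] at hao
    have hle1 : cnt F (fun A => (x ∈ A ∧ sHole k l ∈ A) ∧ (y ∈ A ∧ sHole k l ∈ A))
        ≤ cnt F (fun A => x ∈ A ∧ y ∈ A) := cnt_mono (by tauto)
    rw [f_pn x hx y hy] at hle1
    have hle2 : cnt F (fun A => (x ∈ A ∧ sHole k l ∈ A) ∨ (y ∈ A ∧ sHole k l ∈ A))
        ≤ cnt F (fun A => sHole k l ∈ A) := cnt_mono (by tauto)
    rw [f_s] at hle2
    have hor3 : cnt F (fun A => sHole k l ∈ A ∧ (x ∈ A ∨ y ∈ A)) = 3 := by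
      rw [cnt_congr (fun A _ => by tauto :
        ∀ A ∈ F, (sHole k l ∈ A ∧ (x ∈ A ∨ y ∈ A))
          ↔ ((x ∈ A ∧ sHole k l ∈ A) ∨ (y ∈ A ∧ sHole k l ∈ A)))]
      omega
    have hsp := cnt_split F (fun A => sHole k l ∈ A) (fun A => x ∈ A ∨ y ∈ A)
    rw [hor3, f_s] at hsp
    rw [cnt_congr (fun A _ => by tauto :
      ∀ A ∈ F, (sHole k l ∈ A ∧ ¬ (x ∈ A) ∧ ¬ (y ∈ A))
        ↔ (sHole k l ∈ A ∧ ¬ (x ∈ A ∨ y ∈ A)))]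
    omega
  -- Step 2: every s-member contains all of P or all of N
  have step2 : ∀ A ∈ F, sHole k l ∈ A →
      (∀ x ∈ Pset k l, x ∈ A) ∨ (∀ y ∈ Nset k l, y ∈ A) := by
    intro A hA hsA
    by_contra hcon
    push_neg at hcon
    obtain ⟨⟨x, hx, hxA⟩, ⟨y, hy, hyA⟩⟩ := hcon
    have h0 := step1 x hx y hy
    have hpos : 0 < cnt F (fun A => sHole k l ∈ A ∧ ¬ (x ∈ A) ∧ ¬ (y ∈ A)) :=
      cnt_pos.mpr ⟨A, hA, hsA, hxA, hyA⟩
    omega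
  by_contra hgoal
  have htPN : cnt F (fun A => sHole k l ∈ A ∧ (∀ x ∈ Pset k l, x ∈ A)
      ∧ (∀ y ∈ Nset k l, y ∈ A)) = 0 := by
    by_contra h
    obtain ⟨A, hAF, hsA, hPA, hNA⟩ := cnt_pos.mp (Nat.pos_of_ne_zero h)
    apply hgoal
    have hAuniv : A = Finset.univ := by
      apply Finset.eq_univ_iff_forall.mpr
      intro x
      match x with
      | none => exact hsA
      | some (Sum.inl i) => exact hPA _ (hpP i)
      | some (Sum.inr j) => exact hNA _ (hnN j)
    exact hAuniv ▸ hAF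
  have hsum : cnt F (fun A => sHole k l ∈ A ∧ ∀ x ∈ Pset k l, x ∈ A)
      + cnt F (fun A => sHole k l ∈ A ∧ ∀ y ∈ Nset k l, y ∈ A) = 3 := by
    have hao := cnt_and_or F (fun A => sHole k l ∈ A ∧ ∀ x ∈ Pset k l, x ∈ A)
      (fun A => sHole k l ∈ A ∧ ∀ y ∈ Nset k l, y ∈ A)
    have e1 : cnt F (fun A => (sHole k l ∈ A ∧ ∀ x ∈ Pset k l, x ∈ A)
        ∧ (sHole k l ∈ A ∧ ∀ y ∈ Nset k l, y ∈ A))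
        = cnt F (fun A => sHole k l ∈ A ∧ (∀ x ∈ Pset k l, x ∈ A)
          ∧ (∀ y ∈ Nset k l, y ∈ A)) := cnt_congr (fun A _ => by tauto)
    have e2 : cnt F (fun A => (sHole k l ∈ A ∧ ∀ x ∈ Pset k l, x ∈ A)
        ∨ (sHole k l ∈ A ∧ ∀ y ∈ Nset k l, y ∈ A))
        = cnt F (fun A => sHole k l ∈ A) :=
      cnt_congr (fun A hA => ⟨fun h => h.elim And.left And.left,
        fun h => (step2 A hA h).imp (fun hh => ⟨h, hh⟩) (fun hh => ⟨h, hh⟩)⟩)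
    rw [e1, e2, f_s, htPN] at hao
    omega
  have hk0 : (0:ℕ) < k := by omega
  have hk1 : (1:ℕ) < k := by omega
  have hk2 : (2:ℕ) < k := by omega
  have hl0 : (0:ℕ) < l := by omega
  have hl1 : (1:ℕ) < l := by omega
  have hl2 : (2:ℕ) < l := by omega
  have htN1 : 1 ≤ cnt F (fun A => sHole k l ∈ A ∧ ∀ y ∈ Nset k l, y ∈ A) := by
    by_contra hcon
    have hPAall : ∀ A ∈ F, sHole k l ∈ A → ∀ x ∈ Pset k l, x ∈ A := by
      intro A hA hsA
      rcases step2 A hA hsA with h | h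
      · exact h
      · exact absurd ((cnt_pos (p := fun A => sHole k l ∈ A ∧ ∀ y ∈ Nset k l, y ∈ A)).mpr
          ⟨A, hA, hsA, h⟩) (by omega)
    have heq : cnt F (fun A => posHole k l ⟨0, hk0⟩ ∈ A ∧ sHole k l ∈ A)
        = cnt F (fun A => sHole k l ∈ A) :=
      cnt_congr (fun A hA => ⟨And.right, fun hs => ⟨hPAall A hA hs _ (hpP _), hs⟩⟩)
    rw [f_ps _ (hpP _), f_s] at heq
    omega
  have htP1 : 1 ≤ cnt F (fun A => sHole k l ∈ A ∧ ∀ x ∈ Pset k l, x ∈ A) := by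
    by_contra hcon
    have hNAall : ∀ A ∈ F, sHole k l ∈ A → ∀ y ∈ Nset k l, y ∈ A := by
      intro A hA hsA
      rcases step2 A hA hsA with h | h
      · exact absurd ((cnt_pos (p := fun A => sHole k l ∈ A ∧ ∀ x ∈ Pset k l, x ∈ A)).mpr
          ⟨A, hA, hsA, h⟩) (by omega)
      · exact h
    have heq : cnt F (fun A => negHole k l ⟨0, hl0⟩ ∈ A ∧ sHole k l ∈ A)
        = cnt F (fun A => sHole k l ∈ A) :=
      cnt_congr (fun A hA => ⟨And.right, fun hs => ⟨hNAall A hA hs _ (hnN _), hs⟩⟩)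
    rw [f_ns _ (hnN _), f_s] at heq
    omega
  have hcase : cnt F (fun A => sHole k l ∈ A ∧ ∀ y ∈ Nset k l, y ∈ A) = 2
      ∨ cnt F (fun A => sHole k l ∈ A ∧ ∀ x ∈ Pset k l, x ∈ A) = 2 := by omega
  rcases hcase with hc | hc
  · -- tN = 2 : apply caseC with P positive
    exact caseC F (sHole k l) (Pset k l) (Nset k l)
      (posHole k l ⟨0, hk0⟩) (posHole k l ⟨1, hk1⟩) (posHole k l ⟨2, hk2⟩)
      (hpP _) (hpP _) (hpP _)
      (by simp [posHole]) (by simp [posHole]) (by simp [posHole])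
      f_s (fun x _ => hmult x) f_ps f_pp step2 hc htPN
  · -- tP = 2 : apply caseC with roles swapped
    have step2' : ∀ A ∈ F, sHole k l ∈ A →
        (∀ y ∈ Nset k l, y ∈ A) ∨ (∀ x ∈ Pset k l, x ∈ A) :=
      fun A hA hsA => (step2 A hA hsA).symm
    have htPN' : cnt F (fun A => sHole k l ∈ A ∧ (∀ y ∈ Nset k l, y ∈ A)
        ∧ (∀ x ∈ Pset k l, x ∈ A)) = 0 := by
      rw [cnt_congr (fun A _ => by tauto :
        ∀ A ∈ F, (sHole k l ∈ A ∧ (∀ y ∈ Nset k l, y ∈ A) ∧ (∀ x ∈ Pset k l, x ∈ A))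
          ↔ (sHole k l ∈ A ∧ (∀ x ∈ Pset k l, x ∈ A) ∧ (∀ y ∈ Nset k l, y ∈ A)))]
      exact htPN
    exact caseC F (sHole k l) (Nset k l) (Pset k l)
      (negHole k l ⟨0, hl0⟩) (negHole k l ⟨1, hl1⟩) (negHole k l ⟨2, hl2⟩)
      (hnN _) (hnN _) (hnN _)
      (by simp [negHole]) (by simp [negHole]) (by simp [negHole])
      f_s (fun x _ => hmult x) f_ns f_nn step2' hc htPN'
end

section
/- Assume k ≥ 1 and l ≥ 1. If F is a multiset of nonempty subsets of H satisfying the Hopf multiplicity data, then for every x ∈ H the number ν_x of members of F (counted with multiplicity) that contain x and have cardinality at least 2 (the multi-loops around x) satisfies 2 ≤ ν_x ≤ 3. -/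
/-- If `k ≥ 1` and `l ≥ 1`, then for any multiset `F` of nonempty subsets of
`H` satisfying the Hopf multiplicity data and any hole `x`, the number `ν_x` of members of `F`
(with multiplicity) containing `x` and of cardinality at least `2` satisfies `2 ≤ ν_x ≤ 3`. -/
theorem hopf_config_multiloop_bound (k l : ℕ) (hk : 1 ≤ k) (hl : 1 ≤ l)
    (F : Multiset (Finset (Hole k l))) (hne : ∀ A ∈ F, A.Nonempty) (hF : HopfData F)
    (x : Hole k l) :
    2 ≤ (F.filter (fun A => x ∈ A ∧ 2 ≤ A.card)).card ∧
      (F.filter (fun A => x ∈ A ∧ 2 ≤ A.card)).card ≤ 3 := by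
  constructor
  · -- lower bound: find y ≠ x with jmult F x y = 2
    have key : ∃ y : Hole k l, y ≠ x ∧ jmult F x y = 2 := by
      obtain ⟨h1, h2, h3, h4⟩ := hF
      match x with
      | none =>
        refine ⟨posHole k l ⟨0, hk⟩, by simp [posHole], ?_⟩
        exact h2 none _ (by simp [posHole]) (by simp [sHole])
          (Finset.mem_insert_of_mem (Finset.mem_image_of_mem _ (Finset.mem_univ _)))
      | some (Sum.inl i) =>
        refine ⟨none, by simp, ?_⟩
        refine h2 _ none (by simp [posHole]) ?_ (by simp [sHole])
        exact Finset.mem_insert_of_mem (Finset.mem_image_of_mem _ (Finset.mem_univ i))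
      | some (Sum.inr j) =>
        refine ⟨none, by simp, ?_⟩
        refine h3 _ none (by simp [negHole]) ?_ (by simp [sHole])
        exact Finset.mem_insert_of_mem (Finset.mem_image_of_mem _ (Finset.mem_univ j))
    obtain ⟨y, hyx, hxy⟩ := key
    have hle : F.filter (fun A => x ∈ A ∧ y ∈ A) ≤
        F.filter (fun A => x ∈ A ∧ 2 ≤ A.card) := by
      apply Multiset.monotone_filter_right
      intro A hA
      refine ⟨hA.1, ?_⟩
      have : ({x, y} : Finset (Hole k l)) ⊆ A := by
        intro z hz
        rcases Finset.mem_insert.mp hz with rfl | hz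
        · exact hA.1
        · exact (Finset.mem_singleton.mp hz) ▸ hA.2
      calc 2 = ({x, y} : Finset (Hole k l)).card := by
              rw [Finset.card_insert_of_notMem (by simpa using hyx.symm),
                Finset.card_singleton]
        _ ≤ A.card := Finset.card_le_card this
    have := Multiset.card_le_card hle
    rw [show (F.filter (fun A => x ∈ A ∧ y ∈ A)).card = jmult F x y from rfl, hxy] at this
    exact this
  · have hle : F.filter (fun A => x ∈ A ∧ 2 ≤ A.card) ≤ F.filter (fun A => x ∈ A) :=
      Multiset.monotone_filter_right F (fun A hA => hA.1)
    have := Multiset.card_le_card hle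
    rw [show (F.filter (fun A => x ∈ A)).card = mult F x from rfl, hF.1 x] at this
    exact this
end
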